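/- arXiv:2112.07324 — 9 statements merged into one kernel-verified Lean document; each statement's English description precedes it below -/
import Mathlib

section
/- Let {x_i}_{i=1..n} ⊂ ℝ^m (labels folded into the x_i, i.e. all instances positive) be linearly separable under the ℓ2 adversarial budget of size ε > 0: there exists w with wᵀx_i − ε‖w‖₂ ≥ 1 for all i. Let ŵ be the minimizer of ‖w‖₂ subject to wᵀx_i ≥ 1 for all i, and let ŵ' be the minimizer of ‖w‖₂ subject to wᵀx_i − ε‖w‖₂ ≥ 1 for all i. Then ŵ = ŵ'/(1 + ε‖ŵ'‖₂); in particular ŵ and ŵ' are collinear: ŵ/‖ŵ‖₂ = ŵ'/‖ŵ'‖₂. -/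
open scoped RealInnerProductSpace

/-- The clean `ℓ2` max-margin vector `ŵ` (here `wHat`) and the adversarial
`ℓ2` max-margin vector `ŵ'` (here `wAdv`, under budget size `ε > 0`) satisfy
`ŵ = ŵ'/(1 + ε‖ŵ'‖)`; in particular they are collinear. -/
theorem adv_max_margin_collinear {n m : ℕ}
    (x : Fin n → EuclideanSpace ℝ (Fin m))
    (ε : ℝ) (hε : 0 < ε)
    (hsep : ∃ w : EuclideanSpace ℝ (Fin m), ∀ i, 1 ≤ ⟪w, x i⟫ - ε * ‖w‖)
    (wHat : EuclideanSpace ℝ (Fin m))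
    (hwHat_feas : ∀ i, 1 ≤ ⟪wHat, x i⟫)
    (hwHat_min : ∀ u : EuclideanSpace ℝ (Fin m), (∀ i, 1 ≤ ⟪u, x i⟫) → ‖wHat‖ ≤ ‖u‖)
    (wAdv : EuclideanSpace ℝ (Fin m))
    (hwAdv_feas : ∀ i, 1 ≤ ⟪wAdv, x i⟫ - ε * ‖wAdv‖)
    (hwAdv_min : ∀ u : EuclideanSpace ℝ (Fin m),
      (∀ i, 1 ≤ ⟪u, x i⟫ - ε * ‖u‖) → ‖wAdv‖ ≤ ‖u‖) :
    wHat = (1 + ε * ‖wAdv‖)⁻¹ • wAdv ∧ ‖wHat‖⁻¹ • wHat = ‖wAdv‖⁻¹ • wAdv := by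
  have hnA : (0:ℝ) ≤ ‖wAdv‖ := norm_nonneg _
  have hnH : (0:ℝ) ≤ ‖wHat‖ := norm_nonneg _
  set c : ℝ := 1 + ε * ‖wAdv‖ with hc_def
  have hc : 0 < c := by positivity
  set v : EuclideanSpace ℝ (Fin m) := c⁻¹ • wAdv with hv_def
  have hvnorm : ‖v‖ = c⁻¹ * ‖wAdv‖ := by
    rw [hv_def, norm_smul, Real.norm_eq_abs, abs_of_pos (by positivity)]
  have hv_feas : ∀ i, 1 ≤ ⟪v, x i⟫ := by
    intro i
    have h := hwAdv_feas i
    rw [hv_def, real_inner_smul_left]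
    have : c ≤ ⟪wAdv, x i⟫ := by linarith
    calc (1:ℝ) = c⁻¹ * c := by field_simp
    _ ≤ c⁻¹ * ⟪wAdv, x i⟫ := by
        apply mul_le_mul_of_nonneg_left this (by positivity)
  -- ‖wHat‖ ≤ ‖v‖
  have h1 : ‖wHat‖ ≤ c⁻¹ * ‖wAdv‖ := hvnorm ▸ hwHat_min v hv_feas
  -- ε‖wHat‖ < 1
  have hεw : ε * ‖wHat‖ < 1 := by
    have h2 : ε * ‖wHat‖ ≤ ε * (c⁻¹ * ‖wAdv‖) := by nlinarith
    have h3 : ε * (c⁻¹ * ‖wAdv‖) < 1 := by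
      rw [← mul_assoc, mul_comm ε c⁻¹, mul_assoc]
      have : ε * ‖wAdv‖ < c := by rw [hc_def]; linarith
      calc c⁻¹ * (ε * ‖wAdv‖) < c⁻¹ * c := by
            apply mul_lt_mul_of_pos_left this (by positivity)
      _ = 1 := by field_simp
    linarith
  have hs : (0:ℝ) < 1 - ε * ‖wHat‖ := by linarith
  -- scaled wHat is adversarially feasible
  have hu_feas : ∀ i, 1 ≤ ⟪(1 - ε * ‖wHat‖)⁻¹ • wHat, x i⟫
      - ε * ‖(1 - ε * ‖wHat‖)⁻¹ • wHat‖ := by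
    intro i
    have h := hwHat_feas i
    rw [real_inner_smul_left, norm_smul, Real.norm_eq_abs, abs_of_pos (by positivity)]
    have key : (1 - ε * ‖wHat‖)⁻¹ * (⟪wHat, x i⟫ - ε * ‖wHat‖)
        ≥ (1 - ε * ‖wHat‖)⁻¹ * (1 - ε * ‖wHat‖) :=
      mul_le_mul_of_nonneg_left (by linarith) (by positivity)
    have : (1 - ε * ‖wHat‖)⁻¹ * (1 - ε * ‖wHat‖) = 1 := by field_simp
    nlinarith [key]
  have h2 : ‖wAdv‖ ≤ (1 - ε * ‖wHat‖)⁻¹ * ‖wHat‖ := by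
    have := hwAdv_min _ hu_feas
    rwa [norm_smul, Real.norm_eq_abs, abs_of_pos (by positivity)] at this
  -- conclude norm equality
  have heq : ‖wHat‖ = c⁻¹ * ‖wAdv‖ := by
    have h2' : ‖wAdv‖ * (1 - ε * ‖wHat‖) ≤ ‖wHat‖ := by
      have := mul_le_mul_of_nonneg_right h2 (le_of_lt hs)
      calc ‖wAdv‖ * (1 - ε * ‖wHat‖) ≤ (1 - ε * ‖wHat‖)⁻¹ * ‖wHat‖ * (1 - ε * ‖wHat‖) := this
      _ = ‖wHat‖ := by field_simp
    have h1' : ‖wHat‖ * c ≤ ‖wAdv‖ := by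
      have := mul_le_mul_of_nonneg_right h1 (le_of_lt hc)
      calc ‖wHat‖ * c ≤ c⁻¹ * ‖wAdv‖ * c := this
      _ = ‖wAdv‖ := by field_simp
    have : ‖wHat‖ * c = ‖wAdv‖ := by rw [hc_def] at *; nlinarith
    field_simp
    linarith [this]
  have hveq : ‖v‖ = ‖wHat‖ := by rw [hvnorm, heq]
  -- uniqueness via midpoint
  have hmid_feas : ∀ i, 1 ≤ ⟪(2:ℝ)⁻¹ • (wHat + v), x i⟫ := by
    intro i
    rw [real_inner_smul_left, inner_add_left]
    have := hwHat_feas i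
    have := hv_feas i
    linarith
  have hmid : ‖wHat‖ ≤ ‖(2:ℝ)⁻¹ • (wHat + v)‖ := hwHat_min _ hmid_feas
  have hmid2 : ‖(2:ℝ)⁻¹ • (wHat + v)‖ = 2⁻¹ * ‖wHat + v‖ := by
    rw [norm_smul, Real.norm_eq_abs]; norm_num
  have hsum : 2 * ‖wHat‖ ≤ ‖wHat + v‖ := by rw [hmid2] at hmid; linarith
  have hpar := parallelogram_law_with_norm ℝ wHat v
  have hdiff : ‖wHat - v‖ = 0 := by
    have hsq : (2 * ‖wHat‖) * (2 * ‖wHat‖) ≤ ‖wHat + v‖ * ‖wHat + v‖ :=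
      mul_self_le_mul_self (by positivity) hsum
    rw [hveq] at hpar
    have h0 : ‖wHat - v‖ * ‖wHat - v‖ ≤ 0 := by nlinarith [hpar, hsq]
    exact mul_self_eq_zero.mp (le_antisymm h0 (mul_self_nonneg _))
  have hwv : wHat = v := by
    have := norm_sub_eq_zero_iff.mp hdiff
    exact this
  refine ⟨hwv, ?_⟩
  rcases eq_or_ne wAdv 0 with h0 | h0
  · simp [hwv, hv_def, h0]
  · have hA : (0:ℝ) < ‖wAdv‖ := norm_pos_iff.mpr h0
    rw [hwv, hv_def, smul_smul]
    congr 1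
    rw [norm_smul, Real.norm_eq_abs, abs_of_pos (by positivity : (0:ℝ) < c⁻¹), mul_inv, inv_inv]
    field_simp
end

section
/- Fix a unit vector η ∈ ℝ^m, a label y ∈ {−1, +1}, a component parameter r > 0, a nonzero weight vector w ∈ ℝ^m, and ε ≥ 0. Let x = r y η + z where z ∼ N(0, I_m) is a standard Gaussian vector on ℝ^m. Then the probability that the linear classifier sign(wᵀ·) misclassifies the worst-case ℓ2 perturbation of x, namely P( y wᵀ(x − y ε w/‖w‖₂) < 0 ), equals Φ( r wᵀη/‖w‖₂ − ε ), where Φ(u) = P(Z > u) for Z ∼ N(0,1). -/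
open MeasureTheory
open scoped RealInnerProductSpace
open scoped ENNReal

/-- The standard Gaussian measure on `ℝ^m` (i.i.d. `N(0,1)` coordinates). -/
noncomputable def stdGaussian (m : ℕ) : Measure (EuclideanSpace ℝ (Fin m)) :=
  (Measure.pi fun _ : Fin m => ProbabilityTheory.gaussianReal 0 1).map
    (MeasurableEquiv.toLp 2 (Fin m → ℝ))

lemma lintegral_pi_prod (n : ℕ) (g : Fin n → ℝ → ℝ≥0∞) (hg : ∀ i, Measurable (g i)) :
    ∫⁻ x, ∏ i, g i (x i) ∂(Measure.pi fun _ : Fin n => (volume : Measure ℝ)) =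
      ∏ i, ∫⁻ t, g i t := by
  induction n with
  | zero =>
      simp
  | succ n ih =>
      have hmp := measurePreserving_piFinSuccAbove (fun _ : Fin (n+1) => (volume : Measure ℝ)) 0
      have hG : Measurable fun p : ℝ × (Fin n → ℝ) => g 0 p.1 * ∏ i, g i.succ (p.2 i) := by
        apply Measurable.mul ((hg 0).comp measurable_fst)
        exact Finset.measurable_prod _ fun i _ => (hg i.succ).comp ((measurable_pi_apply i).comp measurable_snd)
      have := hmp.lintegral_comp hG
      have heq : ∀ x : Fin (n+1) → ℝ,
          (fun p : ℝ × (Fin n → ℝ) => g 0 p.1 * ∏ i, g i.succ (p.2 i))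
            (MeasurableEquiv.piFinSuccAbove (fun _ => ℝ) 0 x) = ∏ i, g i (x i) := by
        intro x
        rw [Fin.prod_univ_succ]
        rfl
      simp_rw [heq] at this
      rw [this]
      have h2 := MeasureTheory.lintegral_prod_mul (μ := (volume : Measure ℝ))
        (ν := Measure.pi fun _ : Fin n => (volume : Measure ℝ)) (f := g 0)
        (g := fun x : Fin n → ℝ => ∏ i, g i.succ (x i)) (hg 0).aemeasurable
        (Finset.measurable_prod _ fun i _ => (hg i.succ).comp (measurable_pi_apply i)).aemeasurable
      exact h2.trans (by rw [ih (fun i => g i.succ) (fun i => hg i.succ)]; exact (Fin.prod_univ_succ fun i => ∫⁻ t, g i t).symm)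

open ProbabilityTheory in
lemma pi_gaussian_eq_withDensity (n : ℕ) :
    (Measure.pi fun _ : Fin n => gaussianReal 0 1) =
      (Measure.pi fun _ : Fin n => (volume : Measure ℝ)).withDensity
        (fun x => ∏ i, gaussianPDF 0 1 (x i)) := by
  refine Measure.pi_eq fun s hs => ?_
  rw [withDensity_apply _ (MeasurableSet.univ_pi hs), ← lintegral_indicator (MeasurableSet.univ_pi hs) (fun x => ∏ i, ProbabilityTheory.gaussianPDF 0 1 (x i))]
  have hind : ∀ x : Fin n → ℝ,
      (Set.pi Set.univ s).indicator (fun x => ∏ i, gaussianPDF 0 1 (x i)) x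
        = ∏ i, (s i).indicator (gaussianPDF 0 1) (x i) := by
    intro x
    by_cases hx : x ∈ Set.pi Set.univ s
    · rw [Set.indicator_of_mem hx]
      exact Finset.prod_congr rfl fun i _ =>
        (Set.indicator_of_mem (hx i (Set.mem_univ i)) _).symm
    · rw [Set.indicator_of_notMem hx]
      rw [Set.mem_univ_pi] at hx
      push_neg at hx
      obtain ⟨i, hi⟩ := hx
      exact (Finset.prod_eq_zero (Finset.mem_univ i)
        (Set.indicator_of_notMem hi _)).symm
  simp_rw [hind]
  rw [lintegral_pi_prod n _ (fun i => (measurable_gaussianPDF 0 1).indicator (hs i))]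
  refine Finset.prod_congr rfl fun i _ => ?_
  rw [lintegral_indicator (hs i) _, gaussianReal_apply 0 one_ne_zero]

lemma MeasurableEquiv.map_withDensity' {α β : Type*} [MeasurableSpace α] [MeasurableSpace β]
    (e : α ≃ᵐ β) (μ : Measure α) (f : α → ℝ≥0∞) (hf : Measurable f) :
    (μ.withDensity f).map e = (μ.map e).withDensity (f ∘ e.symm) := by
  ext s hs
  rw [Measure.map_apply e.measurable hs, withDensity_apply _ (e.measurable hs),
    withDensity_apply _ hs,
    setLIntegral_map hs ((hf.comp e.symm.measurable)) e.measurable]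
  refine setLIntegral_congr_fun (e.measurable hs) (fun x _ => ?_)
  simp

set_option maxHeartbeats 1000000 in
open ProbabilityTheory in
lemma stdGaussian_eq_withDensity (m : ℕ) :
    stdGaussian m = (volume : Measure (EuclideanSpace ℝ (Fin m))).withDensity
      (fun z => ∏ i, gaussianPDF 0 1 (z i)) := by
  have h := MeasurableEquiv.map_withDensity' (MeasurableEquiv.toLp 2 (Fin m → ℝ))
    (Measure.pi fun _ : Fin m => (volume : Measure ℝ))
    (fun x : Fin m → ℝ => ∏ i, gaussianPDF 0 1 (x i))
    (Finset.measurable_prod _ fun i _ => (measurable_gaussianPDF 0 1).comp (measurable_pi_apply i))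
  rw [_root_.stdGaussian, pi_gaussian_eq_withDensity, h, ← volume_pi, MeasurableEquiv.coe_toLp,
    (PiLp.volume_preserving_toLp (Fin m)).map_eq]
  rfl

open ProbabilityTheory in
lemma prod_gaussianPDF_eq (m : ℕ) (z : EuclideanSpace ℝ (Fin m)) :
    ∏ i, gaussianPDF 0 1 (z i)
      = ENNReal.ofReal ((Real.sqrt (2 * Real.pi))⁻¹ ^ m * Real.exp (-‖z‖ ^ 2 / 2)) := by
  have h1 : ∀ x : ℝ, gaussianPDFReal 0 1 x
      = (Real.sqrt (2 * Real.pi))⁻¹ * Real.exp (-x ^ 2 / 2) := by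
    intro x
    simp [gaussianPDFReal]
  have h2 : ‖z‖ ^ 2 = ∑ i, z i ^ 2 := by
    rw [EuclideanSpace.norm_eq, Real.sq_sqrt (by positivity)]
    simp [sq_abs]
  calc ∏ i, gaussianPDF 0 1 (z i)
      = ENNReal.ofReal (∏ i, gaussianPDFReal 0 1 (z i)) := by
        rw [ENNReal.ofReal_prod_of_nonneg fun i _ => gaussianPDFReal_nonneg 0 1 (z i)]
        rfl
    _ = ENNReal.ofReal ((Real.sqrt (2 * Real.pi))⁻¹ ^ m * Real.exp (-‖z‖ ^ 2 / 2)) := by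
        congr 1
        simp_rw [h1, Finset.prod_mul_distrib, Finset.prod_const, ← Real.exp_sum, h2]
        congr 1
        · simp
        · rw [← Finset.sum_div, ← Finset.sum_neg_distrib]

open ProbabilityTheory in
lemma stdGaussian_map_isometry (m : ℕ)
    (L : EuclideanSpace ℝ (Fin m) ≃ₗᵢ[ℝ] EuclideanSpace ℝ (Fin m)) :
    (stdGaussian m).map L = stdGaussian m := by
  rw [stdGaussian_eq_withDensity]
  set eL : EuclideanSpace ℝ (Fin m) ≃ᵐ EuclideanSpace ℝ (Fin m) :=
    L.toHomeomorph.toMeasurableEquiv with heL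
  have hcoe : ⇑L = ⇑eL := rfl
  have hf : Measurable fun z : EuclideanSpace ℝ (Fin m) => ∏ i, gaussianPDF 0 1 (z i) :=
    Finset.measurable_prod _ fun i _ => (measurable_gaussianPDF 0 1).comp
      ((measurable_pi_apply i).comp (MeasurableEquiv.toLp 2 (Fin m → ℝ)).symm.measurable)
  rw [hcoe, MeasurableEquiv.map_withDensity' eL _ _ hf]
  have hvol : Measure.map (⇑eL) volume = volume := by
    rw [← hcoe]; exact L.measurePreserving.map_eq
  rw [hvol]
  congr 1
  funext z
  show ∏ i, gaussianPDF 0 1 ((eL.symm z) i) = ∏ i, gaussianPDF 0 1 (z i)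
  have : eL.symm z = L.symm z := rfl
  rw [this, prod_gaussianPDF_eq, prod_gaussianPDF_eq, L.symm.norm_map]

open ProbabilityTheory in
lemma stdGaussian_eval_lt (m : ℕ) (i₀ : Fin m) (d : ℝ) :
    stdGaussian m {z : EuclideanSpace ℝ (Fin m) | z i₀ < d} = gaussianReal 0 1 (Set.Iio d) := by
  have hSm : MeasurableSet {z : EuclideanSpace ℝ (Fin m) | z i₀ < d} := by
    have : Measurable fun z : EuclideanSpace ℝ (Fin m) => z i₀ :=
      (measurable_pi_apply i₀).comp (MeasurableEquiv.toLp 2 (Fin m → ℝ)).symm.measurable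
    exact measurableSet_lt this measurable_const
  rw [_root_.stdGaussian, Measure.map_apply (MeasurableEquiv.measurable _) hSm]
  have hpre : (⇑(MeasurableEquiv.toLp 2 (Fin m → ℝ))) ⁻¹'
      {z : EuclideanSpace ℝ (Fin m) | z i₀ < d}
      = Function.eval i₀ ⁻¹' Set.Iio d := rfl
  rw [hpre, Set.eval_preimage, Measure.pi_pi]
  simp [Function.update_apply, apply_ite (ProbabilityTheory.gaussianReal 0 1), measure_univ]

open ProbabilityTheory in
lemma stdGaussian_halfspace (m : ℕ) (v : EuclideanSpace ℝ (Fin m)) (hv : v ≠ 0) (c : ℝ) :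
    stdGaussian m {z | ⟪v, z⟫ < c} = gaussianReal 0 1 (Set.Iio (c / ‖v‖)) := by
  have hm : m ≠ 0 := by
    rintro rfl
    exact hv (Subsingleton.elim v 0)
  have hvn : (0:ℝ) < ‖v‖ := norm_pos_iff.mpr hv
  set i₀ : Fin m := ⟨0, Nat.pos_of_ne_zero hm⟩
  set u : EuclideanSpace ℝ (Fin m) := ‖v‖⁻¹ • v with hu_def
  have hu : ‖u‖ = 1 := norm_smul_inv_norm hv
  set e₀ : EuclideanSpace ℝ (Fin m) := EuclideanSpace.single i₀ (1:ℝ) with he₀_def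
  have he₀ : ‖e₀‖ = 1 := by simp [he₀_def]
  have hset : {z : EuclideanSpace ℝ (Fin m) | ⟪v, z⟫ < c}
      = {z : EuclideanSpace ℝ (Fin m) | ⟪u, z⟫ < c / ‖v‖} := by
    ext z
    simp only [Set.mem_setOf_eq, hu_def, real_inner_smul_left]
    rw [div_eq_inv_mul]
    exact (mul_lt_mul_iff_right₀ (inv_pos.mpr hvn)).symm
  rw [hset]
  set R := Submodule.reflection (ℝ ∙ (u - e₀))ᗮ with hR_def
  have hRu : R u = e₀ := Submodule.reflection_sub (hu.trans he₀.symm)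
  have hRsymm : ∀ x, R.symm x = R x := fun x => by rw [hR_def, Submodule.reflection_symm]
  have hmap := stdGaussian_map_isometry m R
  have hSm : MeasurableSet {z : EuclideanSpace ℝ (Fin m) | ⟪u, z⟫ < c / ‖v‖} := by
    have : Measurable fun z : EuclideanSpace ℝ (Fin m) => ⟪u, z⟫ :=
      (innerSL ℝ u).continuous.measurable
    exact measurableSet_lt this measurable_const
  rw [← hmap, Measure.map_apply R.continuous.measurable hSm]
  have hpre : (⇑R) ⁻¹' {z : EuclideanSpace ℝ (Fin m) | ⟪u, z⟫ < c / ‖v‖}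
      = {z : EuclideanSpace ℝ (Fin m) | z i₀ < c / ‖v‖} := by
    ext z
    simp only [Set.mem_preimage, Set.mem_setOf_eq]
    have : ⟪u, R z⟫ = ⟪R.symm u, z⟫ := by
      conv_lhs => rw [← R.apply_symm_apply u]
      rw [R.inner_map_map]
    rw [this, hRsymm, hRu, he₀_def]
    rw [EuclideanSpace.inner_single_left]
    simp
  rw [hpre, stdGaussian_eval_lt]

open ProbabilityTheory in
lemma gaussianReal_Iio_neg (a : ℝ) :
    gaussianReal 0 1 (Set.Iio (-a)) = gaussianReal 0 1 (Set.Ioi a) := by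
  have hmap : (gaussianReal 0 1).map (fun x : ℝ => -x) = gaussianReal 0 1 := by
    have h := gaussianReal_map_const_mul (μ := 0) (v := 1) (-1 : ℝ)
    simp only [neg_one_mul, mul_zero] at h
    rw [h]
    congr 1
    ext
    norm_num
  have hpre : (fun x : ℝ => -x) ⁻¹' Set.Ioi a = Set.Iio (-a) := by
    ext x
    simp [lt_neg]
  rw [← hpre, ← Measure.map_apply measurable_neg measurableSet_Ioi, hmap]

/-- For `x = r y η + z`, `z ∼ N(0, I_m)`, the probability that the linear
classifier `sign(wᵀ·)` misclassifies the worst-case `ℓ2` perturbation of `x`, namely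
`P(y wᵀ(x − y ε w/‖w‖) < 0)`, equals `Φ(r wᵀη/‖w‖ − ε)` where `Φ(u) = P(Z > u)`,
`Z ∼ N(0,1)`. -/
theorem robust_error_single_gaussian_component {m : ℕ}
    (η : EuclideanSpace ℝ (Fin m)) (hη : ‖η‖ = 1)
    (y : ℝ) (hy : y = 1 ∨ y = -1)
    (r : ℝ) (hr : 0 < r)
    (w : EuclideanSpace ℝ (Fin m)) (hw : w ≠ 0)
    (ε : ℝ) (hε : 0 ≤ ε) :
    stdGaussian m {z | y * ⟪w, ((r * y) • η + z) - (y * ε / ‖w‖) • w⟫ < 0} =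
      ProbabilityTheory.gaussianReal 0 1 (Set.Ioi (r * ⟪w, η⟫ / ‖w‖ - ε)) := by
  have hy1 : y * y = 1 := by rcases hy with rfl | rfl <;> norm_num
  have hyne : y ≠ 0 := by rcases hy with rfl | rfl <;> norm_num
  have hya : |y| = 1 := by rcases hy with rfl | rfl <;> norm_num
  have hwn : (0:ℝ) < ‖w‖ := norm_pos_iff.mpr hw
  have expand : ∀ z : EuclideanSpace ℝ (Fin m),
      y * ⟪w, ((r * y) • η + z) - (y * ε / ‖w‖) • w⟫
        = ⟪y • w, z⟫ + r * ⟪w, η⟫ - ε * ‖w‖ := by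
    intro z
    rw [inner_sub_right, inner_add_right, real_inner_smul_right, real_inner_smul_right,
      real_inner_self_eq_norm_sq, real_inner_smul_left]
    have h3 : y * ε / ‖w‖ * ‖w‖ ^ 2 = y * ε * ‖w‖ := by
      field_simp
    rw [h3]
    linear_combination (r * ⟪w, η⟫ - ε * ‖w‖) * hy1
  have hset : {z : EuclideanSpace ℝ (Fin m) |
        y * ⟪w, ((r * y) • η + z) - (y * ε / ‖w‖) • w⟫ < 0}
      = {z : EuclideanSpace ℝ (Fin m) | ⟪y • w, z⟫ < ε * ‖w‖ - r * ⟪w, η⟫} := by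
    ext z
    simp only [Set.mem_setOf_eq, expand z]
    constructor <;> intro h <;> linarith
  rw [hset]
  have hv : y • w ≠ 0 := smul_ne_zero hyne hw
  rw [stdGaussian_halfspace m (y • w) hv]
  have hnorm : ‖y • w‖ = ‖w‖ := by
    rw [norm_smul, Real.norm_eq_abs, hya, one_mul]
  rw [hnorm]
  have harg : (ε * ‖w‖ - r * ⟪w, η⟫) / ‖w‖ = -(r * ⟪w, η⟫ / ‖w‖ - ε) := by
    field_simp
    ring
  rw [harg, gaussianReal_Iio_neg]
end

section
/- Let y ∈ ℝⁿ, η ∈ ℝ^m, r ∈ ℝ, and Q ∈ ℝ^{n×m}, and set X = r y ηᵀ + Q ∈ ℝ^{n×m}. Define U = QQᵀ, d = Qη, s = yᵀU⁻¹y, t = dᵀU⁻¹d, v = yᵀU⁻¹d. Assume U and XXᵀ are invertible and D := r²s(‖η‖₂² − t) + (rv + 1)² ≠ 0. Then yᵀ(XXᵀ)⁻¹ = yᵀU⁻¹ − [ (r²s‖η‖₂² + r²v² + rv − r²st) yᵀ + r s dᵀ ] U⁻¹ / D. -/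
open Matrix

private lemma vecMulVec_mul_left {n m k : ℕ} (a : Fin n → ℝ) (b : Fin m → ℝ)
    (M : Matrix (Fin m) (Fin k) ℝ) :
    vecMulVec a b * M = vecMulVec a (b ᵥ* M) := by
  ext i j
  simp [vecMulVec_apply, Matrix.mul_apply, Matrix.vecMul, dotProduct, Finset.mul_sum, mul_assoc]

private lemma mul_vecMulVec_right {n m k : ℕ} (M : Matrix (Fin n) (Fin m) ℝ)
    (a : Fin m → ℝ) (b : Fin k → ℝ) :
    M * vecMulVec a b = vecMulVec (M *ᵥ a) b := by
  ext i j
  simp [vecMulVec_apply, Matrix.mul_apply, Matrix.mulVec, dotProduct, Finset.sum_mul, mul_assoc]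

private lemma vecMul_vecMulVec' {n k : ℕ} (x a : Fin n → ℝ) (b : Fin k → ℝ) :
    x ᵥ* vecMulVec a b = (x ⬝ᵥ a) • b := by
  ext j
  simp [vecMulVec_apply, Matrix.vecMul, dotProduct, Finset.sum_mul, mul_assoc]

private lemma transpose_vecMulVec' {n k : ℕ} (a : Fin n → ℝ) (b : Fin k → ℝ) :
    (vecMulVec a b)ᵀ = vecMulVec b a := by
  ext i j
  simp [vecMulVec_apply, mul_comm]

private lemma vecMulVec_smul_right {n k : ℕ} (a : Fin n → ℝ) (c : ℝ) (b : Fin k → ℝ) :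
    vecMulVec a (c • b) = c • vecMulVec a b := by
  ext i j
  simp [vecMulVec_apply]
  ring

/-- Woodbury-type identity for `yᵀ(XXᵀ)⁻¹` where `X = r y ηᵀ + Q`. -/
theorem row_inverse_woodbury {n m : ℕ}
    (y : Fin n → ℝ) (η : Fin m → ℝ) (r : ℝ) (Q : Matrix (Fin n) (Fin m) ℝ)
    (X : Matrix (Fin n) (Fin m) ℝ) (hX : X = r • Matrix.vecMulVec y η + Q)
    (U : Matrix (Fin n) (Fin n) ℝ) (hU : U = Q * Qᵀ)
    (d : Fin n → ℝ) (hd : d = Q.mulVec η)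
    (s : ℝ) (hs : s = y ⬝ᵥ U⁻¹.mulVec y)
    (t : ℝ) (ht : t = d ⬝ᵥ U⁻¹.mulVec d)
    (v : ℝ) (hv : v = y ⬝ᵥ U⁻¹.mulVec d)
    (hUinv : IsUnit U.det) (hXXtinv : IsUnit (X * Xᵀ).det)
    (D : ℝ) (hDdef : D = r ^ 2 * s * (η ⬝ᵥ η - t) + (r * v + 1) ^ 2) (hD : D ≠ 0) :
    Matrix.vecMul y (X * Xᵀ)⁻¹ =
      Matrix.vecMul y U⁻¹ -
        D⁻¹ • Matrix.vecMul
          ((r ^ 2 * s * (η ⬝ᵥ η) + r ^ 2 * v ^ 2 + r * v - r ^ 2 * s * t) • y + (r * s) • d)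
          U⁻¹ := by
  have hUsym : Uᵀ = U := by rw [hU, Matrix.transpose_mul, Matrix.transpose_transpose]
  have hUisym : (U⁻¹)ᵀ = U⁻¹ := by rw [Matrix.transpose_nonsing_inv, hUsym]
  set e := η ⬝ᵥ η with he
  set a := r ^ 2 * s * e + r ^ 2 * v ^ 2 + r * v - r ^ 2 * s * t with ha
  set w := y ᵥ* U⁻¹ - D⁻¹ • ((a • y + (r * s) • d) ᵥ* U⁻¹) with hw
  -- dot product facts
  have hdv : d ᵥ* U⁻¹ = U⁻¹ *ᵥ d := by
    conv_lhs => rw [← hUisym]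
    exact Matrix.vecMul_transpose _ _
  have h1 : (y ᵥ* U⁻¹) ⬝ᵥ y = s := by rw [hs, Matrix.dotProduct_mulVec]
  have h2 : (y ᵥ* U⁻¹) ⬝ᵥ d = v := by rw [hv, Matrix.dotProduct_mulVec]
  have h3 : (d ᵥ* U⁻¹) ⬝ᵥ y = v := by rw [hdv, dotProduct_comm, hv]
  have h4 : (d ᵥ* U⁻¹) ⬝ᵥ d = t := by rw [ht, Matrix.dotProduct_mulVec]
  -- expansion of X Xᵀ
  have hXX : X * Xᵀ = U + (r ^ 2 * e) • vecMulVec y y + r • vecMulVec y d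
      + r • vecMulVec d y := by
    rw [hX]
    rw [Matrix.transpose_add, Matrix.transpose_smul, transpose_vecMulVec']
    rw [Matrix.add_mul, Matrix.mul_add, Matrix.mul_add, Matrix.smul_mul, Matrix.smul_mul,
      Matrix.mul_smul, Matrix.mul_smul, vecMulVec_mul_left, mul_vecMulVec_right,
      vecMulVec_mul_left, ← hU, ← Matrix.vecMul_transpose]
    have hηv : η ᵥ* vecMulVec η y = e • y := by rw [vecMul_vecMulVec', he]
    rw [hηv, vecMulVec_smul_right, Matrix.vecMul_transpose, ← hd]
    module
  -- w times (X Xᵀ) is y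
  have hwU : w ᵥ* U = y - D⁻¹ • (a • y + (r * s) • d) := by
    rw [hw, Matrix.sub_vecMul, Matrix.smul_vecMul, Matrix.vecMul_vecMul, Matrix.vecMul_vecMul,
      Matrix.nonsing_inv_mul _ hUinv, Matrix.vecMul_one, Matrix.vecMul_one]
  have hwy : w ⬝ᵥ y = s - D⁻¹ * (a * s + r * s * v) := by
    rw [hw, sub_dotProduct, smul_dotProduct, Matrix.add_vecMul,
      Matrix.smul_vecMul, Matrix.smul_vecMul, add_dotProduct,
      smul_dotProduct, smul_dotProduct, h1, h3]
    simp only [smul_eq_mul]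
    try ring
  have hwd : w ⬝ᵥ d = v - D⁻¹ * (a * v + r * s * t) := by
    rw [hw, sub_dotProduct, smul_dotProduct, Matrix.add_vecMul,
      Matrix.smul_vecMul, Matrix.smul_vecMul, add_dotProduct,
      smul_dotProduct, smul_dotProduct, h2, h4]
    simp only [smul_eq_mul]
    try ring
  have hkey : w ᵥ* (X * Xᵀ) = y := by
    rw [hXX, Matrix.vecMul_add, Matrix.vecMul_add, Matrix.vecMul_add]
    have hsm : ∀ (c : ℝ) (M : Matrix (Fin n) (Fin n) ℝ), w ᵥ* (c • M) = c • (w ᵥ* M) := by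
      intro c M
      ext j
      simp only [Matrix.vecMul, dotProduct, Matrix.smul_apply, smul_eq_mul,
        Pi.smul_apply, Finset.mul_sum]
      exact Finset.sum_congr rfl fun x _ => by ring
    rw [hsm, hsm, hsm, hwU, vecMul_vecMulVec', vecMul_vecMulVec', vecMul_vecMulVec',
      hwy, hwd]
    funext i
    simp only [Pi.add_apply, Pi.sub_apply, Pi.smul_apply, smul_eq_mul]
    have : a = r ^ 2 * s * e + r ^ 2 * v ^ 2 + r * v - r ^ 2 * s * t := ha
    field_simp
    rw [hDdef]
    ring
  calc y ᵥ* (X * Xᵀ)⁻¹ = (w ᵥ* (X * Xᵀ)) ᵥ* (X * Xᵀ)⁻¹ := by rw [hkey]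
    _ = w := by
        rw [Matrix.vecMul_vecMul, Matrix.mul_nonsing_inv _ hXXtinv, Matrix.vecMul_one]
end

section
/- Let y ∈ ℝⁿ, η ∈ ℝ^m, r ∈ ℝ, and Q ∈ ℝ^{n×m}, and set X = r y ηᵀ + Q ∈ ℝ^{n×m}. Define U = QQᵀ, d = Qη, s = yᵀU⁻¹y, t = dᵀU⁻¹d, v = yᵀU⁻¹d. Assume U and XXᵀ are invertible and D := r²s(‖η‖₂² − t) + (rv + 1)² ≠ 0. Then yᵀ(XXᵀ)⁻¹Xη = ( r s(‖η‖₂² − t) + r v² + v ) / D. -/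
open Matrix

lemma vmv_mulVec {n m : ℕ} (u : Fin n → ℝ) (w x : Fin m → ℝ) :
    (Matrix.vecMulVec u w).mulVec x = (w ⬝ᵥ x) • u := by
  ext i
  simp only [Matrix.mulVec, Matrix.vecMulVec_apply, dotProduct, Pi.smul_apply,
    smul_eq_mul, Finset.sum_mul]
  exact Finset.sum_congr rfl fun j _ => by ring

lemma vmv_transpose {n m : ℕ} (u : Fin n → ℝ) (w : Fin m → ℝ) :
    (Matrix.vecMulVec u w)ᵀ = Matrix.vecMulVec w u := by
  ext i j
  simp [Matrix.vecMulVec_apply, mul_comm]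

/-- `yᵀ(XXᵀ)⁻¹Xη = (r s (‖η‖² − t) + r v² + v) / D` where `X = r y ηᵀ + Q`. -/
theorem bilinear_form_inverse_eq {n m : ℕ}
    (y : Fin n → ℝ) (η : Fin m → ℝ) (r : ℝ) (Q : Matrix (Fin n) (Fin m) ℝ)
    (X : Matrix (Fin n) (Fin m) ℝ) (hX : X = r • Matrix.vecMulVec y η + Q)
    (U : Matrix (Fin n) (Fin n) ℝ) (hU : U = Q * Qᵀ)
    (d : Fin n → ℝ) (hd : d = Q.mulVec η)
    (s : ℝ) (hs : s = y ⬝ᵥ U⁻¹.mulVec y)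
    (t : ℝ) (ht : t = d ⬝ᵥ U⁻¹.mulVec d)
    (v : ℝ) (hv : v = y ⬝ᵥ U⁻¹.mulVec d)
    (hUinv : IsUnit U.det) (hXXtinv : IsUnit (X * Xᵀ).det)
    (D : ℝ) (hDdef : D = r ^ 2 * s * (η ⬝ᵥ η - t) + (r * v + 1) ^ 2) (hD : D ≠ 0) :
    y ⬝ᵥ (X * Xᵀ)⁻¹.mulVec (X.mulVec η) =
      (r * s * (η ⬝ᵥ η - t) + r * v ^ 2 + v) / D := by
  set c : ℝ := η ⬝ᵥ η with hc
  set a : Fin n → ℝ := U⁻¹.mulVec y with ha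
  set b : Fin n → ℝ := U⁻¹.mulVec d with hb
  -- U⁻¹ is symmetric
  have hUsymm : Uᵀ = U := by rw [hU, Matrix.transpose_mul, Matrix.transpose_transpose]
  have hUinvT : (U⁻¹)ᵀ = U⁻¹ := by rw [Matrix.transpose_nonsing_inv, hUsymm]
  have hUa : U.mulVec a = y := by
    rw [ha, Matrix.mulVec_mulVec, Matrix.mul_nonsing_inv _ hUinv, Matrix.one_mulVec]
  have hUb : U.mulVec b = d := by
    rw [hb, Matrix.mulVec_mulVec, Matrix.mul_nonsing_inv _ hUinv, Matrix.one_mulVec]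
  -- dot products
  have hda : d ⬝ᵥ a = v := by
    rw [ha, Matrix.dotProduct_mulVec, ← Matrix.mulVec_transpose, hUinvT, hv, hb,
      dotProduct_comm]
  have hyb : y ⬝ᵥ b = v := hv.symm
  have hya : y ⬝ᵥ a = s := hs.symm
  have hdb : d ⬝ᵥ b = t := ht.symm
  -- Q * Qᵀ applied
  have hQQa : Q.mulVec (Qᵀ.mulVec a) = y := by rw [Matrix.mulVec_mulVec, ← hU, hUa]
  have hQQb : Q.mulVec (Qᵀ.mulVec b) = d := by rw [Matrix.mulVec_mulVec, ← hU, hUb]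
  have hηQa : η ⬝ᵥ Qᵀ.mulVec a = v := by
    rw [Matrix.dotProduct_mulVec, Matrix.vecMul_transpose, ← hd, hda]
  have hηQb : η ⬝ᵥ Qᵀ.mulVec b = t := by
    rw [Matrix.dotProduct_mulVec, Matrix.vecMul_transpose, ← hd, hdb]
  -- X applied to things
  have hXη : X.mulVec η = (r * c) • y + d := by
    rw [hX, Matrix.add_mulVec, Matrix.smul_mulVec, vmv_mulVec, ← hc, ← hd,
      smul_smul]
  have hXvec : ∀ x : Fin m → ℝ,
      X.mulVec x = (r * (η ⬝ᵥ x)) • y + Q.mulVec x := by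
    intro x
    rw [hX, Matrix.add_mulVec, Matrix.smul_mulVec, vmv_mulVec, smul_smul]
  have hXT : Xᵀ = r • Matrix.vecMulVec η y + Qᵀ := by
    rw [hX, Matrix.transpose_add, Matrix.transpose_smul, vmv_transpose]
  have hXTvec : ∀ x : Fin n → ℝ,
      Xᵀ.mulVec x = (r * (y ⬝ᵥ x)) • η + Qᵀ.mulVec x := by
    intro x
    rw [hXT, Matrix.add_mulVec, Matrix.smul_mulVec, vmv_mulVec, smul_smul]
  -- (X Xᵀ) a and (X Xᵀ) b
  have hXXa : (X * Xᵀ).mulVec a = (r ^ 2 * s * c + r * v + 1) • y + (r * s) • d := by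
    rw [← Matrix.mulVec_mulVec, hXTvec a, hya, Matrix.mulVec_add, Matrix.mulVec_smul,
      hXη, hXvec (Qᵀ.mulVec a), hQQa, hηQa]
    module
  have hXXb : (X * Xᵀ).mulVec b = (r ^ 2 * v * c + r * t) • y + (r * v + 1) • d := by
    rw [← Matrix.mulVec_mulVec, hXTvec b, hyb, Matrix.mulVec_add, Matrix.mulVec_smul,
      hXη, hXvec (Qᵀ.mulVec b), hQQb, hηQb]
    module
  -- the solution vector
  set α : ℝ := r * (c - t) / D with hα
  set β : ℝ := (r * v + 1) / D with hβ
  set z : Fin n → ℝ := α • a + β • b with hz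
  have hcoef1 : α * (r ^ 2 * s * c + r * v + 1) + β * (r ^ 2 * v * c + r * t) = r * c := by
    rw [hα, hβ]; field_simp; rw [hDdef]; ring
  have hcoef2 : α * (r * s) + β * (r * v + 1) = 1 := by
    rw [hα, hβ]; field_simp; rw [hDdef]; ring
  have hsolve : (X * Xᵀ).mulVec z = X.mulVec η := by
    rw [hz, Matrix.mulVec_add, Matrix.mulVec_smul, Matrix.mulVec_smul, hXXa, hXXb, hXη]
    rw [smul_add, smul_add, smul_smul, smul_smul, smul_smul, smul_smul]
    rw [show (α * (r ^ 2 * s * c + r * v + 1)) • y + (α * (r * s)) • d +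
        ((β * (r ^ 2 * v * c + r * t)) • y + (β * (r * v + 1)) • d)
        = (α * (r ^ 2 * s * c + r * v + 1) + β * (r ^ 2 * v * c + r * t)) • y +
          (α * (r * s) + β * (r * v + 1)) • d by module]
    rw [hcoef1, hcoef2, one_smul]
  have hinv : (X * Xᵀ)⁻¹.mulVec (X.mulVec η) = z := by
    rw [← hsolve, Matrix.mulVec_mulVec, Matrix.nonsing_inv_mul _ hXXtinv, Matrix.one_mulVec]
  rw [hinv, hz, dotProduct_add, dotProduct_smul, dotProduct_smul,
    hya, hyb, hα, hβ]
  field_simp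
  ring_nf
  field_simp
end

section
/- Let p_1, …, p_K > 0 with Σ_k p_k = 1 and r_1 < r_2 < … < r_K be positive reals. Let g : (0, ∞) → ℝ be differentiable with g'(r) > 0 for all r, and define R(r, ε) = Σ_{k=1}^K p_k Φ( r_k g(r) − ε ), where Φ(u) = P(Z > u) for Z ∼ N(0,1). Fix r > 0 and ε ≥ 0 such that r_k g(r) − ε > 0 for all k (separability). Then ∂R/∂r (r, ε) < 0, and ∂R/∂r (r, ε) is strictly decreasing in ε on the range of ε preserving separability: if 0 ≤ ε₁ < ε₂ and r_k g(r) − ε₂ > 0 for all k, then ∂R/∂r (r, ε₂) < ∂R/∂r (r, ε₁). -/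
open scoped BigOperators

open MeasureTheory ProbabilityTheory Real Set in
lemma phi_cont : Continuous (ProbabilityTheory.gaussianPDFReal 0 1) := by
  rw [gaussianPDFReal_def]; fun_prop

/-- The standard Gaussian tail function `Φ(u) = P(Z > u)`, `Z ∼ N(0,1)`. -/
noncomputable def gaussTail (u : ℝ) : ℝ :=
  (ProbabilityTheory.gaussianReal 0 1 (Set.Ioi u)).toReal

open MeasureTheory ProbabilityTheory Real Set in
lemma gaussTail_eq (u : ℝ) :
    gaussTail u = ∫ x in Set.Ioi u, gaussianPDFReal 0 1 x := by
  rw [gaussTail, gaussianReal_apply_eq_integral 0 one_ne_zero,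
    ENNReal.toReal_ofReal (setIntegral_nonneg measurableSet_Ioi
      (fun x _ => gaussianPDFReal_nonneg 0 1 x))]

open MeasureTheory ProbabilityTheory Real Set in
lemma hasDerivAt_gaussTail (u : ℝ) :
    HasDerivAt gaussTail (-(gaussianPDFReal 0 1 u)) u := by
  have hint : Integrable (gaussianPDFReal 0 1) := integrable_gaussianPDFReal 0 1
  have key : ∀ v : ℝ, gaussTail v = gaussTail 0 - ∫ x in (0:ℝ)..v, gaussianPDFReal 0 1 x := by
    intro v
    rw [gaussTail_eq, gaussTail_eq, ← intervalIntegral.integral_Iic_sub_Iic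
      hint.integrableOn hint.integrableOn]
    have h0 := intervalIntegral.integral_Iic_add_Ioi (b := (0:ℝ))
      hint.integrableOn hint.integrableOn
    have hv := intervalIntegral.integral_Iic_add_Ioi (b := v)
      hint.integrableOn hint.integrableOn
    linarith
  have hD : HasDerivAt (fun v => ∫ x in (0:ℝ)..v, gaussianPDFReal 0 1 x)
      (gaussianPDFReal 0 1 u) u :=
    intervalIntegral.integral_hasDerivAt_right hint.intervalIntegrable
      phi_cont.stronglyMeasurable.stronglyMeasurableAtFilter phi_cont.continuousAt
  have := ((hasDerivAt_const u (gaussTail 0)).sub hD)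
  simp only [zero_sub] at this
  exact this.congr_of_eventuallyEq (Filter.Eventually.of_forall key)

open ProbabilityTheory Real in
lemma phi_anti {a b : ℝ} (ha : 0 ≤ a) (hab : a < b) :
    gaussianPDFReal 0 1 b < gaussianPDFReal 0 1 a := by
  simp only [gaussianPDFReal, sub_zero, NNReal.coe_one, mul_one]
  have hc : 0 < (Real.sqrt (2 * π))⁻¹ := by
    rw [inv_pos]
    exact Real.sqrt_pos.mpr (by positivity)
  apply mul_lt_mul_of_pos_left _ hc
  apply Real.exp_lt_exp.mpr
  have : a ^ 2 < b ^ 2 := by nlinarith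
  linarith

open ProbabilityTheory in
lemma deriv_robust (K : ℕ) (p rr : Fin K → ℝ) (g : ℝ → ℝ) (r₀ : ℝ)
    (hgd : DifferentiableAt ℝ g r₀) (ε : ℝ) :
    deriv (fun r => ∑ k, p k * gaussTail (rr k * g r - ε)) r₀ =
      ∑ k, p k * (-(gaussianPDFReal 0 1 (rr k * g r₀ - ε)) * (rr k * deriv g r₀)) := by
  have hg : HasDerivAt g (deriv g r₀) r₀ := hgd.hasDerivAt
  have h : HasDerivAt (fun r => ∑ k, p k * gaussTail (rr k * g r - ε))
      (∑ k, p k * (-(gaussianPDFReal 0 1 (rr k * g r₀ - ε)) * (rr k * deriv g r₀))) r₀ := by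
    apply HasDerivAt.fun_sum
    intro k _
    have hin : HasDerivAt (fun r => rr k * g r - ε) (rr k * deriv g r₀) r₀ :=
      (hg.const_mul (rr k)).sub_const ε
    exact ((hasDerivAt_gaussTail (rr k * g r₀ - ε)).comp r₀ hin).const_mul (p k)
  exact h.deriv

/-- The derivative in `r` of the robust test error
`R(r, ε) = Σ_k p_k Φ(r_k g(r) − ε)` is negative, and it strictly decreases as the
adversarial budget `ε` increases (within the separable regime). -/
theorem robust_error_deriv_neg_and_decreasing_in_budget
    {K : ℕ} (p rr : Fin K → ℝ)
    (hp : ∀ k, 0 < p k) (hpsum : ∑ k, p k = 1)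
    (hrpos : ∀ k, 0 < rr k) (hrmono : StrictMono rr)
    (g : ℝ → ℝ) (hgdiff : ∀ r : ℝ, 0 < r → DifferentiableAt ℝ g r)
    (hg' : ∀ r : ℝ, 0 < r → 0 < deriv g r)
    (r₀ : ℝ) (hr₀ : 0 < r₀) (ε : ℝ) (hε : 0 ≤ ε)
    (hsep : ∀ k, 0 < rr k * g r₀ - ε) :
    deriv (fun r => ∑ k, p k * gaussTail (rr k * g r - ε)) r₀ < 0 ∧
    ∀ ε₁ ε₂ : ℝ, 0 ≤ ε₁ → ε₁ < ε₂ → (∀ k, 0 < rr k * g r₀ - ε₂) →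
      deriv (fun r => ∑ k, p k * gaussTail (rr k * g r - ε₂)) r₀ <
        deriv (fun r => ∑ k, p k * gaussTail (rr k * g r - ε₁)) r₀ := by
  have hK : 0 < K := by
    by_contra h
    interval_cases K
    simp at hpsum
  haveI : Nonempty (Fin K) := ⟨⟨0, hK⟩⟩
  have hne : (Finset.univ : Finset (Fin K)).Nonempty := Finset.univ_nonempty
  have hgd := hgdiff r₀ hr₀
  have hg'pos := hg' r₀ hr₀
  constructor
  · rw [deriv_robust K p rr g r₀ hgd ε]
    apply Finset.sum_neg _ hne
    intro k _
    have hφ := ProbabilityTheory.gaussianPDFReal_pos 0 1 (rr k * g r₀ - ε) one_ne_zero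
    have hc : 0 < rr k * deriv g r₀ := mul_pos (hrpos k) hg'pos
    have : p k * (-(ProbabilityTheory.gaussianPDFReal 0 1 (rr k * g r₀ - ε)) * (rr k * deriv g r₀))
        = -(p k * (ProbabilityTheory.gaussianPDFReal 0 1 (rr k * g r₀ - ε) * (rr k * deriv g r₀))) := by ring
    rw [this]
    exact neg_lt_zero.mpr (mul_pos (hp k) (mul_pos hφ hc))
  · intro ε₁ ε₂ hε₁ h12 hsep₂
    rw [deriv_robust K p rr g r₀ hgd ε₁, deriv_robust K p rr g r₀ hgd ε₂]
    apply Finset.sum_lt_sum_of_nonempty hne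
    intro k _
    have h2 := hsep₂ k
    have hlt : rr k * g r₀ - ε₂ < rr k * g r₀ - ε₁ := by linarith
    have hφ := phi_anti (le_of_lt h2) hlt
    have hc : 0 < rr k * deriv g r₀ := mul_pos (hrpos k) hg'pos
    exact mul_lt_mul_of_pos_left
      (mul_lt_mul_of_pos_right (neg_lt_neg hφ) hc) (hp k)
end

section
/- Let f : ℝ^m → [−1, 1], y ∈ {−1, +1}, x ∈ ℝ^m, ε ≥ 0, and let x' be a maximizer of (f(x + Δ) − y)² over perturbations Δ in the adversarial budget {Δ : ‖Δ‖ ≤ ε} (i.e. x' = x + Δ* with ‖Δ*‖ ≤ ε and (f(x') − y)² ≥ (f(x + Δ) − y)² for all ‖Δ‖ ≤ ε). Suppose ζ ≥ 0 satisfies [f(x) − ζ, f(x) + ζ] ⊆ { f(x + Δ) : ‖Δ‖ ≤ ε }. Then (y − f(x'))² ≥ (y − f(x))² + ζ². -/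
/-- If `x'` maximizes the squared loss over the adversarial budget and the
bandwidth condition holds with parameter `ζ`, then
`(y − f(x'))² ≥ (y − f(x))² + ζ²`. -/
theorem adversarial_loss_bandwidth_lower_bound
    {E : Type*} [NormedAddCommGroup E]
    (f : E → ℝ) (hf : ∀ x : E, f x ∈ Set.Icc (-1 : ℝ) 1)
    (y : ℝ) (hy : y = 1 ∨ y = -1)
    (x : E) (ε : ℝ) (hε : 0 ≤ ε)
    (Δstar : E) (hΔstar : ‖Δstar‖ ≤ ε)
    (hmax : ∀ Δ : E, ‖Δ‖ ≤ ε → (f (x + Δ) - y) ^ 2 ≤ (f (x + Δstar) - y) ^ 2)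
    (ζ : ℝ) (hζ : 0 ≤ ζ)
    (hband : Set.Icc (f x - ζ) (f x + ζ) ⊆ (fun Δ => f (x + Δ)) '' Metric.closedBall 0 ε) :
    (y - f x) ^ 2 + ζ ^ 2 ≤ (y - f (x + Δstar)) ^ 2 := by
  obtain ⟨hfl, hfu⟩ := hf x
  rcases hy with rfl | rfl
  · -- y = 1 : use f(x) - ζ
    obtain ⟨Δ, hΔ, hfΔ⟩ := hband ⟨le_refl _, by linarith⟩
    simp only [Metric.mem_closedBall, dist_zero_right] at hΔ
    have h := hmax Δ hΔ
    simp only at hfΔ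
    rw [hfΔ] at h
    nlinarith [h]
  · -- y = -1 : use f(x) + ζ
    obtain ⟨Δ, hΔ, hfΔ⟩ := hband ⟨by linarith, le_refl _⟩
    simp only [Metric.mem_closedBall, dist_zero_right] at hΔ
    have h := hmax Δ hΔ
    simp only at hfΔ
    rw [hfΔ] at h
    nlinarith [h]
end

section
/- Let f : ℝ^m → [−1, 1], let (x_1, y_1), …, (x_n, y_n) ∈ ℝ^m × {−1, +1}, ε ≥ 0, and ζ ≥ 0. Suppose for every i the bandwidth condition [f(x_i) − ζ, f(x_i) + ζ] ⊆ { f(x_i + Δ) : ‖Δ‖ ≤ ε } holds, and the empirical adversarial mean squared error satisfies (1/n) Σ_{i=1}^n sup_{‖Δ‖≤ε} (f(x_i + Δ) − y_i)² ≤ C. Then the clean empirical mean squared error satisfies (1/n) Σ_{i=1}^n (f(x_i) − y_i)² ≤ C − ζ². -/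
/-- If the bandwidth condition holds with parameter `ζ` at every data point
and the empirical adversarial mean squared error is at most `C`, then the clean empirical
mean squared error is at most `C − ζ²`. -/
theorem clean_mse_le_adv_mse_sub_bandwidth_sq
    {E : Type*} [NormedAddCommGroup E] {n : ℕ} (hn : 0 < n)
    (f : E → ℝ) (hf : ∀ x : E, f x ∈ Set.Icc (-1 : ℝ) 1)
    (x : Fin n → E) (y : Fin n → ℝ) (hy : ∀ i, y i = 1 ∨ y i = -1)
    (ε : ℝ) (hε : 0 ≤ ε) (ζ : ℝ) (hζ : 0 ≤ ζ)
    (hband : ∀ i, Set.Icc (f (x i) - ζ) (f (x i) + ζ) ⊆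
      (fun Δ => f (x i + Δ)) '' Metric.closedBall 0 ε)
    (C : ℝ)
    (hadv : (n : ℝ)⁻¹ * ∑ i, sSup ((fun Δ => (f (x i + Δ) - y i) ^ 2) ''
      Metric.closedBall 0 ε) ≤ C) :
    (n : ℝ)⁻¹ * ∑ i, (f (x i) - y i) ^ 2 ≤ C - ζ ^ 2 := by
  have key : ∀ i, (f (x i) - y i) ^ 2 + ζ ^ 2 ≤
      sSup ((fun Δ => (f (x i + Δ) - y i) ^ 2) '' Metric.closedBall 0 ε) := by
    intro i
    have hbdd : BddAbove ((fun Δ => (f (x i + Δ) - y i) ^ 2) '' Metric.closedBall 0 ε) := by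
      refine ⟨4, ?_⟩
      rintro _ ⟨Δ, _, rfl⟩
      have h1 := (hf (x i + Δ)).1
      have h2 := (hf (x i + Δ)).2
      rcases hy i with h | h <;> rw [h] <;> simp only <;> nlinarith
    rcases hy i with h | h
    · -- y = 1, use value f(x i) - ζ
      obtain ⟨Δ, hΔ, hfΔ⟩ := hband i ⟨le_refl _, by linarith⟩
      have hmem : (f (x i + Δ) - y i) ^ 2 ∈
          (fun Δ => (f (x i + Δ) - y i) ^ 2) '' Metric.closedBall 0 ε :=
        ⟨Δ, hΔ, rfl⟩
      have := le_csSup hbdd hmem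
      have h2 := (hf (x i)).2
      simp only at hfΔ
      rw [h] at this ⊢
      nlinarith [this, hfΔ]
    · obtain ⟨Δ, hΔ, hfΔ⟩ := hband i ⟨by linarith, le_refl _⟩
      have hmem : (f (x i + Δ) - y i) ^ 2 ∈
          (fun Δ => (f (x i + Δ) - y i) ^ 2) '' Metric.closedBall 0 ε :=
        ⟨Δ, hΔ, rfl⟩
      have := le_csSup hbdd hmem
      have h1 := (hf (x i)).1
      simp only at hfΔ
      rw [h] at this ⊢
      nlinarith [this, hfΔ]
  have hsum : (∑ i, (f (x i) - y i) ^ 2) + (n : ℝ) * ζ ^ 2 ≤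
      ∑ i, sSup ((fun Δ => (f (x i + Δ) - y i) ^ 2) '' Metric.closedBall 0 ε) := by
    calc (∑ i, (f (x i) - y i) ^ 2) + (n : ℝ) * ζ ^ 2
        = ∑ i : Fin n, ((f (x i) - y i) ^ 2 + ζ ^ 2) := by
          rw [Finset.sum_add_distrib]
          simp [Finset.card_univ, mul_comm]
      _ ≤ _ := Finset.sum_le_sum fun i _ => key i
  have hn' : (0 : ℝ) < n := by exact_mod_cast hn
  have := mul_le_mul_of_nonneg_left hsum (le_of_lt (inv_pos.mpr hn'))
  rw [mul_add, inv_mul_cancel_left₀ (ne_of_gt hn')] at this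
  linarith
end

section
/- Let μ be a probability distribution on ℝ^m × {−1, +1}, g(x) = E[y | x], z(x, y) = y − g(x), and σ² = E[z²]. Let (x_1, y_1), …, (x_n, y_n) be i.i.d. samples from μ. Let ℱ be a countable family of measurable functions f : ℝ^m → [−1, 1], ε ≥ 0, C ≥ 0, and ζ ≥ 0 such that every f ∈ ℱ satisfies the bandwidth condition [f(x) − ζ, f(x) + ζ] ⊆ { f(x + Δ) : ‖Δ‖ ≤ ε } for all x ∈ ℝ^m. Set γ = σ² + ζ² − C and assume γ ≥ 0. Then for every a ∈ (0, 1): P( ∃ f ∈ ℱ : (1/n) Σ_{i=1}^n sup_{‖Δ‖≤ε} (f(x_i + Δ) − y_i)² ≤ C ) ≤ 2 exp(−n a² γ² / 8) + P( ∃ f ∈ ℱ : (1/n) Σ_{i=1}^n f(x_i) z(x_i, y_i) ≥ (1 − 3a) γ / 2 ). -/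
open MeasureTheory
open scoped BigOperators ENNReal

/-- `g(x) = E[y | x]`, realized as the conditional expectation of the label (the second
coordinate) with respect to the σ-algebra generated by the input (the first coordinate). -/
noncomputable def condMean {E : Type*} [MeasurableSpace E]
    (μ : Measure (E × ℝ)) : E × ℝ → ℝ :=
  MeasureTheory.condExp (MeasurableSpace.comap Prod.fst inferInstance) μ (fun q => q.2)

/-- `σ² = E[z²] = E[Var(y | x)]` where `z = y − g(x)` is the label noise. -/
noncomputable def condNoiseVar {E : Type*} [MeasurableSpace E]
    (μ : Measure (E × ℝ)) : ℝ :=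
  ∫ q, (q.2 - condMean μ q) ^ 2 ∂μ

/-- Pointwise convexity bound: for `|x| ≤ 1`, `exp (t*x) ≤ cosh t + x * sinh t`. -/
lemma aux_exp_le_cosh_add_mul_sinh {t x : ℝ} (hx : |x| ≤ 1) :
    Real.exp (t * x) ≤ Real.cosh t + x * Real.sinh t := by
  obtain ⟨hx1, hx2⟩ := abs_le.mp hx
  have ha : (0:ℝ) ≤ (1 - x) / 2 := by linarith
  have hb : (0:ℝ) ≤ (1 + x) / 2 := by linarith
  have hab : (1 - x) / 2 + (1 + x) / 2 = 1 := by ring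
  have hcvx := convexOn_exp.2 (Set.mem_univ (-t)) (Set.mem_univ t) ha hb hab
  simp only [smul_eq_mul] at hcvx
  have harg : (1 - x) / 2 * (-t) + (1 + x) / 2 * t = t * x := by ring
  rw [harg] at hcvx
  rw [Real.cosh_eq, Real.sinh_eq]
  calc Real.exp (t * x) ≤ (1 - x) / 2 * Real.exp (-t) + (1 + x) / 2 * Real.exp t := hcvx
    _ = (Real.exp t + Real.exp (-t)) / 2 + x * ((Real.exp t - Real.exp (-t)) / 2) := by ring

/-- A sub-Gaussian moment bound for a centered random variable bounded by `1`. -/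
lemma aux_integral_exp_le {α : Type*} [MeasurableSpace α] (μ : Measure α)
    [IsProbabilityMeasure μ] (f : α → ℝ) (hmeas : AEStronglyMeasurable f μ)
    (hbd : ∀ᵐ x ∂μ, |f x| ≤ 1) (hmean : ∫ x, f x ∂μ = 0) (t : ℝ) :
    ∫ x, Real.exp (t * f x) ∂μ ≤ Real.exp (t ^ 2 / 2) := by
  have hif : Integrable f μ := by
    refine (integrable_const (1:ℝ)).mono' hmeas ?_
    filter_upwards [hbd] with x hx using by simpa [Real.norm_eq_abs] using hx
  have hint_exp : Integrable (fun x => Real.exp (t * f x)) μ := by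
    refine (integrable_const (Real.exp |t|)).mono' ?_ ?_
    · exact Real.continuous_exp.comp_aestronglyMeasurable (hmeas.const_mul t)
    · filter_upwards [hbd] with x hx
      rw [Real.norm_eq_abs, Real.abs_exp]
      refine Real.exp_le_exp.2 ?_
      calc t * f x ≤ |t * f x| := le_abs_self _
        _ = |t| * |f x| := abs_mul _ _
        _ ≤ |t| * 1 := by gcongr
        _ = |t| := mul_one _
  have h1 : ∫ x, Real.exp (t * f x) ∂μ ≤ ∫ x, (Real.cosh t + f x * Real.sinh t) ∂μ := by
    refine integral_mono_ae hint_exp ((integrable_const _).add (hif.mul_const _)) ?_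
    filter_upwards [hbd] with x hx using aux_exp_le_cosh_add_mul_sinh hx
  have h2 : ∫ x, (Real.cosh t + f x * Real.sinh t) ∂μ = Real.cosh t := by
    rw [integral_add (integrable_const _) (hif.mul_const _), integral_const,
      integral_mul_const, hmean]
    simp
  calc ∫ x, Real.exp (t * f x) ∂μ ≤ Real.cosh t := by rw [← h2]; exact h1
    _ ≤ Real.exp (t ^ 2 / 2) := Real.cosh_le_exp_half_sq t

/-- Fubini for an i.i.d. product of one fixed integrand. -/
lemma aux_integral_pi_prod {α : Type*} [MeasurableSpace α] (μ : Measure α)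
    [IsProbabilityMeasure μ] (n : ℕ) (f : α → ℝ) :
    ∫ ω : Fin n → α, ∏ i, f (ω i) ∂(Measure.pi fun _ => μ) = (∫ x, f x ∂μ) ^ n := by
  letI : MeasureSpace α := ⟨μ⟩
  haveI : SigmaFinite (volume : Measure α) := inferInstanceAs (SigmaFinite μ)
  have h := MeasureTheory.integral_fin_nat_prod_eq_prod (μ := fun _ => μ) (fun _ : Fin n => f)
  simpa [MeasureTheory.volume_pi, Finset.prod_const, Finset.card_univ] using h

/-- The σ-algebra generated by the first coordinate. -/
def inputMS (E : Type*) [MeasurableSpace E] : MeasurableSpace (E × ℝ) :=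
  MeasurableSpace.comap Prod.fst inferInstance

lemma inputMS_le (E : Type*) [MeasurableSpace E] :
    inputMS E ≤ (Prod.instMeasurableSpace : MeasurableSpace (E × ℝ)) :=
  measurable_fst.comap_le

set_option maxHeartbeats 1000000 in
/-- **Lemma 4.** Probability bound reducing a small adversarial training
error to a correlation event between the model and the label noise. -/
theorem small_adv_error_implies_noise_correlation
    {E : Type*} [NormedAddCommGroup E] [MeasurableSpace E] [BorelSpace E]
    (μ : Measure (E × ℝ)) [IsProbabilityMeasure μ]
    (hlab : ∀ᵐ q ∂μ, q.2 = 1 ∨ q.2 = -1)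
    (n : ℕ) (F : Set (E → ℝ)) (hFc : F.Countable)
    (hrange : ∀ f ∈ F, ∀ x : E, f x ∈ Set.Icc (-1 : ℝ) 1)
    (hmeas : ∀ f ∈ F, Measurable f)
    (ε C ζ : ℝ) (hε : 0 ≤ ε) (hC : 0 ≤ C) (hζ : 0 ≤ ζ)
    (hband : ∀ f ∈ F, ∀ x : E, Set.Icc (f x - ζ) (f x + ζ) ⊆
      (fun Δ => f (x + Δ)) '' Metric.closedBall 0 ε)
    (γ : ℝ) (hγdef : γ = condNoiseVar μ + ζ ^ 2 - C) (hγ : 0 ≤ γ)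
    (a : ℝ) (ha : a ∈ Set.Ioo (0 : ℝ) 1) :
    (Measure.pi fun _ : Fin n => μ)
        {ω | ∃ f ∈ F, (n : ℝ)⁻¹ * ∑ i, sSup
          ((fun Δ => (f ((ω i).1 + Δ) - (ω i).2) ^ 2) '' Metric.closedBall 0 ε) ≤ C} ≤
      ENNReal.ofReal (2 * Real.exp (-(n * a ^ 2 * γ ^ 2 / 8))) +
        (Measure.pi fun _ : Fin n => μ)
          {ω | ∃ f ∈ F, (1 - 3 * a) * γ / 2 ≤
            (n : ℝ)⁻¹ * ∑ i, f (ω i).1 * ((ω i).2 - condMean μ (ω i))} := by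
  classical
  obtain ⟨ha0, ha1⟩ := ha
  -- notation
  have hm : inputMS E ≤ (Prod.instMeasurableSpace : MeasurableSpace (E × ℝ)) := inputMS_le E
  set g : E × ℝ → ℝ := condMean μ with hgdef
  have hgeq : g = μ[(fun q : E × ℝ => q.2)|inputMS E] := rfl
  have hg_sm : StronglyMeasurable[inputMS E] g := hgeq ▸ stronglyMeasurable_condExp
  have hg_meas : Measurable g := (hg_sm.mono hm).measurable
  have hy_abs : ∀ᵐ q ∂μ, |q.2| ≤ 1 := by
    filter_upwards [hlab] with q hq
    rcases hq with h | h <;> rw [h] <;> norm_num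
  have hg_bdd : ∀ᵐ q ∂μ, |g q| ≤ 1 := by
    rw [hgeq]
    have := ae_bdd_condExp_of_ae_bdd (m := inputMS E) (μ := μ) (R := 1)
      (f := fun q : E × ℝ => q.2) (by simpa using hy_abs)
    simpa using this
  -- integrability facts
  have hy_int : Integrable (fun q : E × ℝ => q.2) μ := by
    refine (integrable_const (1:ℝ)).mono' measurable_snd.aestronglyMeasurable ?_
    filter_upwards [hy_abs] with q hq using by simpa [Real.norm_eq_abs] using hq
  have hg2_int : Integrable (fun q => (g q) ^ 2) μ := by
    refine (integrable_const (1:ℝ)).mono' ((hg_meas.pow_const 2).aestronglyMeasurable) ?_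
    filter_upwards [hg_bdd] with q hq
    rw [Real.norm_eq_abs, abs_pow]
    nlinarith [abs_nonneg (g q)]
  have hgy_int : Integrable (fun q : E × ℝ => g q * q.2) μ := by
    refine (integrable_const (1:ℝ)).mono' ((hg_meas.mul measurable_snd).aestronglyMeasurable) ?_
    filter_upwards [hg_bdd, hy_abs] with q h1 h2
    rw [Real.norm_eq_abs, abs_mul]
    nlinarith [abs_nonneg (g q), abs_nonneg q.2]
  set m0 : ℝ := ∫ q, (g q) ^ 2 ∂μ with hm0def
  have hm0_nonneg : 0 ≤ m0 := integral_nonneg fun q => sq_nonneg _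
  have hm0_le_one : m0 ≤ 1 := by
    rw [hm0def]
    calc ∫ q, (g q) ^ 2 ∂μ ≤ ∫ _q, (1:ℝ) ∂μ := by
          refine integral_mono_ae hg2_int (integrable_const _) ?_
          filter_upwards [hg_bdd] with q hq
          nlinarith [sq_abs (g q), abs_nonneg (g q)]
      _ = 1 := by simp
  -- the key identity: ∫ g y = ∫ g²
  have hkey : ∫ q, g q * q.2 ∂μ = m0 := by
    haveI : SigmaFinite (μ.trim hm) := inferInstance
    have hpull : μ[(g * fun q : E × ℝ => q.2)|inputMS E]
        =ᵐ[μ] g * μ[(fun q : E × ℝ => q.2)|inputMS E] :=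
      condExp_mul_of_stronglyMeasurable_left hg_sm (by exact hgy_int) hy_int
    calc ∫ q, g q * q.2 ∂μ
        = ∫ q, (μ[(g * fun q : E × ℝ => q.2)|inputMS E]) q ∂μ := (integral_condExp hm).symm
      _ = ∫ q, (g * μ[(fun q : E × ℝ => q.2)|inputMS E]) q ∂μ := integral_congr_ae hpull
      _ = ∫ q, (g * g) q ∂μ := by rw [← hgeq]
      _ = m0 := by
          rw [hm0def]
          congr 1
          funext q
          simp only [Pi.mul_apply]
          ring
  -- the conditional noise variance equals 1 - m0
  have hvar : condNoiseVar μ = 1 - m0 := by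
    have hcong : ∫ q, (q.2 - condMean μ q) ^ 2 ∂μ
        = ∫ q, (1 - 2 * (g q * q.2) + (g q) ^ 2) ∂μ := by
      refine integral_congr_ae ?_
      filter_upwards [hlab] with q hq
      have hy2 : q.2 ^ 2 = 1 := by rcases hq with h | h <;> rw [h] <;> norm_num
      rw [← hgdef]
      linear_combination hy2
    have hint1 : Integrable (fun q : E × ℝ => 1 - 2 * (g q * q.2)) μ :=
      (integrable_const (1:ℝ)).sub (hgy_int.const_mul 2)
    rw [condNoiseVar, hcong]
    rw [show (fun q : E × ℝ => 1 - 2 * (g q * q.2) + (g q) ^ 2)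
        = (fun q : E × ℝ => (1 - 2 * (g q * q.2)) + (g q) ^ 2) from rfl,
      integral_add hint1 hg2_int, integral_sub (integrable_const _) (hgy_int.const_mul 2),
      integral_const, integral_const_mul, hkey, ← hm0def]
    simp only [measureReal_def, measure_univ, ENNReal.toReal_one, smul_eq_mul, mul_one, one_mul]
    ring
  have hγ2 : γ = 1 - m0 + ζ ^ 2 - C := by rw [hγdef, hvar]
  -- trivial case n = 0
  rcases Nat.eq_zero_or_pos n with hn0 | hn
  · subst hn0
    have h1 : (1:ℝ≥0∞) ≤ ENNReal.ofReal (2 * Real.exp (-(((0:ℕ):ℝ) * a ^ 2 * γ ^ 2 / 8))) := by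
      rw [show -(((0:ℕ):ℝ) * a ^ 2 * γ ^ 2 / 8) = 0 by norm_num, Real.exp_zero, mul_one]
      exact ENNReal.one_le_ofReal.mpr one_le_two
    exact le_trans prob_le_one (le_trans h1 le_self_add)
  have hnR : (0:ℝ) < n := by exact_mod_cast hn
  -- deviation event and Chernoff bound
  set t : ℝ := 3 * a * γ with htdef
  have ht : 0 ≤ t := by positivity
  set P : Measure (Fin n → E × ℝ) := Measure.pi fun _ : Fin n => μ with hPdef
  haveI hPprob : IsProbabilityMeasure P := by rw [hPdef]; infer_instance
  set X : (Fin n → E × ℝ) → ℝ := fun ω => ∑ i, ((g (ω i)) ^ 2 - m0) with hXdef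
  have hX_meas : Measurable X := by
    refine Finset.measurable_sum _ fun i _ => ?_
    exact ((hg_meas.comp (measurable_pi_apply i)).pow_const 2).sub measurable_const
  have hGae : ∀ᵐ ω ∂P, ∀ i, (((ω i).2 = 1 ∨ (ω i).2 = -1) ∧ |g (ω i)| ≤ 1) := by
    rw [ae_all_iff]
    intro i
    exact (Measure.tendsto_eval_ae_ae (μ := fun _ : Fin n => μ) (i := i)).eventually (hlab.and hg_bdd)
  have hcoord_bdd : ∀ (q : E × ℝ), |g q| ≤ 1 → |(g q) ^ 2 - m0| ≤ 1 := by
    intro q hq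
    rw [abs_le]
    constructor
    · nlinarith [sq_nonneg (g q)]
    · nlinarith [sq_abs (g q), abs_nonneg (g q)]
  have hXbdd : ∀ᵐ ω ∂P, |X ω| ≤ n := by
    filter_upwards [hGae] with ω hω
    calc |X ω| ≤ ∑ i, |(g (ω i)) ^ 2 - m0| := Finset.abs_sum_le_sum_abs _ _
      _ ≤ ∑ _i : Fin n, (1:ℝ) := Finset.sum_le_sum fun i _ => hcoord_bdd _ (hω i).2
      _ = n := by simp
  have hint_exp : Integrable (fun ω => Real.exp (t * X ω)) P := by
    refine (integrable_const (Real.exp (t * n))).mono'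
      (Real.continuous_exp.comp_aestronglyMeasurable
        ((hX_meas.const_mul t).aestronglyMeasurable)) ?_
    filter_upwards [hXbdd] with ω hω
    rw [Real.norm_eq_abs, Real.abs_exp]
    exact Real.exp_le_exp.2 (mul_le_mul_of_nonneg_left ((abs_le.1 hω).2) ht)
  have hsingle : ∫ q, Real.exp (t * ((g q) ^ 2 - m0)) ∂μ ≤ Real.exp (t ^ 2 / 2) := by
    refine aux_integral_exp_le μ _ (((hg_meas.pow_const 2).sub measurable_const).aestronglyMeasurable)
      ?_ ?_ t
    · filter_upwards [hg_bdd] with q hq using hcoord_bdd q hq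
    · simp only [Pi.sub_apply]
      rw [integral_sub hg2_int (integrable_const _), integral_const]
      simp [← hm0def]
  have hmgf : ∫ ω, Real.exp (t * X ω) ∂P ≤ Real.exp (n * t ^ 2 / 2) := by
    have hfac : (fun ω : Fin n → E × ℝ => Real.exp (t * X ω))
        = fun ω => ∏ i, Real.exp (t * ((g (ω i)) ^ 2 - m0)) := by
      funext ω
      rw [hXdef, Finset.mul_sum, Real.exp_sum]
    rw [hfac, hPdef, aux_integral_pi_prod μ n (fun q => Real.exp (t * ((g q) ^ 2 - m0)))]
    calc (∫ q, Real.exp (t * ((g q) ^ 2 - m0)) ∂μ) ^ n ≤ (Real.exp (t ^ 2 / 2)) ^ n :=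
          pow_le_pow_left₀ (integral_nonneg fun q => (Real.exp_pos _).le) hsingle n
      _ = Real.exp (n * t ^ 2 / 2) := by
          rw [← Real.exp_nat_mul]
          ring_nf
  have hDbound : P {ω | (n:ℝ) * t ≤ X ω} ≤
      ENNReal.ofReal (2 * Real.exp (-(n * a ^ 2 * γ ^ 2 / 8))) := by
    have hcher := ProbabilityTheory.measure_ge_le_exp_mul_mgf (μ := P) (X := X)
      ((n:ℝ) * t) ht hint_exp
    have hmgf_eq : ProbabilityTheory.mgf X P t = ∫ ω, Real.exp (t * X ω) ∂P := rfl
    have h1 : (P {ω | (n:ℝ) * t ≤ X ω}).toReal ≤ Real.exp (-(n * t ^ 2 / 2)) := by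
      calc (P {ω | (n:ℝ) * t ≤ X ω}).toReal
          ≤ Real.exp (-t * ((n:ℝ) * t)) * ProbabilityTheory.mgf X P t := hcher
        _ ≤ Real.exp (-t * ((n:ℝ) * t)) * Real.exp (n * t ^ 2 / 2) := by
            rw [hmgf_eq]; gcongr
        _ = Real.exp (-(n * t ^ 2 / 2)) := by rw [← Real.exp_add]; ring_nf
    have h2 : Real.exp (-(n * t ^ 2 / 2)) ≤ 2 * Real.exp (-(n * a ^ 2 * γ ^ 2 / 8)) := by
      have h3 : -((n:ℝ) * t ^ 2 / 2) ≤ -(n * a ^ 2 * γ ^ 2 / 8) := by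
        rw [htdef]
        nlinarith [sq_nonneg (a * γ), hnR.le]
      calc Real.exp (-((n:ℝ) * t ^ 2 / 2)) ≤ Real.exp (-(n * a ^ 2 * γ ^ 2 / 8)) :=
            Real.exp_le_exp.2 h3
        _ ≤ 2 * Real.exp (-(n * a ^ 2 * γ ^ 2 / 8)) := by
            nlinarith [Real.exp_pos (-((n:ℝ) * a ^ 2 * γ ^ 2 / 8))]
    rw [← ENNReal.ofReal_toReal (measure_ne_top P _)]
    exact ENNReal.ofReal_le_ofReal (h1.trans h2)
  -- the inclusion of events
  have hsub : {ω : Fin n → E × ℝ | ∃ f ∈ F, (n : ℝ)⁻¹ * ∑ i, sSup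
        ((fun Δ => (f ((ω i).1 + Δ) - (ω i).2) ^ 2) '' Metric.closedBall 0 ε) ≤ C} ⊆
      ({ω | (n:ℝ) * t ≤ X ω} ∪
        {ω | ¬ ∀ i, (((ω i).2 = 1 ∨ (ω i).2 = -1) ∧ |g (ω i)| ≤ 1)}) ∪
      {ω | ∃ f ∈ F, (1 - 3 * a) * γ / 2 ≤
        (n : ℝ)⁻¹ * ∑ i, f (ω i).1 * ((ω i).2 - g (ω i))} := by
    intro ω hω
    by_cases hG : ∀ i, (((ω i).2 = 1 ∨ (ω i).2 = -1) ∧ |g (ω i)| ≤ 1)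
    swap
    · exact Or.inl (Or.inr hG)
    by_cases hDev : (n:ℝ) * t ≤ X ω
    · exact Or.inl (Or.inl hDev)
    right
    push_neg at hDev
    obtain ⟨f, hfF, hfle⟩ := hω
    refine ⟨f, hfF, ?_⟩
    -- per-coordinate lower bound on the adversarial loss
    have hib : ∀ i : Fin n, (f (ω i).1 - (ω i).2) ^ 2 + ζ ^ 2 ≤ sSup
        ((fun Δ => (f ((ω i).1 + Δ) - (ω i).2) ^ 2) '' Metric.closedBall 0 ε) := by
      intro i
      obtain ⟨hy, -⟩ := hG i
      set x := (ω i).1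
      set y := (ω i).2
      have hbddA : BddAbove ((fun Δ => (f (x + Δ) - y) ^ 2) '' Metric.closedBall 0 ε) := by
        refine ⟨4, ?_⟩
        rintro v ⟨Δ, -, rfl⟩
        have h1 := hrange f hfF (x + Δ)
        show (f (x + Δ) - y) ^ 2 ≤ 4
        rcases hy with h | h <;> rw [h] <;> nlinarith [h1.1, h1.2]
      set c : ℝ := if y ≤ f x then f x + ζ else f x - ζ with hcdef
      have hc : c ∈ Set.Icc (f x - ζ) (f x + ζ) := by
        rw [hcdef]
        split <;> constructor <;> linarith
      obtain ⟨Δ, hΔ, hfΔ⟩ := hband f hfF x hc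
      have hmem : (c - y) ^ 2 ∈ ((fun Δ => (f (x + Δ) - y) ^ 2) '' Metric.closedBall 0 ε) :=
        ⟨Δ, hΔ, by
          show (f (x + Δ) - y) ^ 2 = (c - y) ^ 2
          rw [show f (x + Δ) = c from hfΔ]⟩
      refine le_trans ?_ (le_csSup hbddA hmem)
      rw [hcdef]
      split
      · nlinarith [hζ]
      · nlinarith [hζ]
    have hib2 : ∀ i : Fin n, ζ ^ 2 + 1 - (g (ω i)) ^ 2
        - 2 * (f (ω i).1 * ((ω i).2 - g (ω i)))
        ≤ (f (ω i).1 - (ω i).2) ^ 2 + ζ ^ 2 := by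
      intro i
      obtain ⟨hy, -⟩ := hG i
      have hy2 : ((ω i).2) ^ 2 = 1 := by rcases hy with h | h <;> rw [h] <;> norm_num
      nlinarith [sq_nonneg (f (ω i).1 - g (ω i))]
    -- sum it up
    set S : ℝ := ∑ i, sSup
      ((fun Δ => (f ((ω i).1 + Δ) - (ω i).2) ^ 2) '' Metric.closedBall 0 ε) with hSdef
    set S2 : ℝ := ∑ i, (g (ω i)) ^ 2 with hS2def
    set T : ℝ := ∑ i, f (ω i).1 * ((ω i).2 - g (ω i)) with hTdef
    have hsum1 : S ≤ n * C := by
      have h := mul_le_mul_of_nonneg_left hfle hnR.le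
      rwa [← mul_assoc, mul_inv_cancel₀ hnR.ne', one_mul] at h
    have hsum2 : (n:ℝ) * (ζ ^ 2 + 1) - S2 - 2 * T ≤ S := by
      have h := Finset.sum_le_sum fun i (_ : i ∈ Finset.univ) =>
        le_trans (hib2 i) (hib i)
      calc (n:ℝ) * (ζ ^ 2 + 1) - S2 - 2 * T
          = ∑ i : Fin n, (ζ ^ 2 + 1 - (g (ω i)) ^ 2
              - 2 * (f (ω i).1 * ((ω i).2 - g (ω i)))) := by
            rw [hS2def, hTdef, Finset.sum_sub_distrib, Finset.sum_sub_distrib,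
              Finset.sum_const, Finset.card_univ, Fintype.card_fin, ← Finset.mul_sum,
              nsmul_eq_mul]
        _ ≤ S := h
    have hXval : X ω = S2 - n * m0 := by
      show (∑ i, ((g (ω i)) ^ 2 - m0)) = S2 - n * m0
      rw [hS2def, Finset.sum_sub_distrib, Finset.sum_const, Finset.card_univ,
        Fintype.card_fin, nsmul_eq_mul]
    have hS2lt : S2 < n * m0 + n * t := by
      rw [hXval] at hDev
      linarith
    have hT : (n:ℝ) * ((1 - 3 * a) * γ / 2) ≤ T := by
      rw [htdef] at hS2lt
      nlinarith [hγ2]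
    calc (1 - 3 * a) * γ / 2 = (n:ℝ)⁻¹ * ((n:ℝ) * ((1 - 3 * a) * γ / 2)) := by
          field_simp
      _ ≤ (n:ℝ)⁻¹ * T := by gcongr
  -- put everything together
  have hGbad : P {ω | ¬ ∀ i, (((ω i).2 = 1 ∨ (ω i).2 = -1) ∧ |g (ω i)| ≤ 1)} = 0 :=
    ae_iff.mp hGae
  calc P {ω | ∃ f ∈ F, (n : ℝ)⁻¹ * ∑ i, sSup
        ((fun Δ => (f ((ω i).1 + Δ) - (ω i).2) ^ 2) '' Metric.closedBall 0 ε) ≤ C}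
      ≤ P (({ω | (n:ℝ) * t ≤ X ω} ∪
          {ω | ¬ ∀ i, (((ω i).2 = 1 ∨ (ω i).2 = -1) ∧ |g (ω i)| ≤ 1)}) ∪
        {ω | ∃ f ∈ F, (1 - 3 * a) * γ / 2 ≤
          (n : ℝ)⁻¹ * ∑ i, f (ω i).1 * ((ω i).2 - g (ω i))}) := measure_mono hsub
    _ ≤ P ({ω | (n:ℝ) * t ≤ X ω} ∪
          {ω | ¬ ∀ i, (((ω i).2 = 1 ∨ (ω i).2 = -1) ∧ |g (ω i)| ≤ 1)}) +
        P {ω | ∃ f ∈ F, (1 - 3 * a) * γ / 2 ≤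
          (n : ℝ)⁻¹ * ∑ i, f (ω i).1 * ((ω i).2 - g (ω i))} := measure_union_le _ _
    _ ≤ (P {ω | (n:ℝ) * t ≤ X ω} +
          P {ω | ¬ ∀ i, (((ω i).2 = 1 ∨ (ω i).2 = -1) ∧ |g (ω i)| ≤ 1)}) +
        P {ω | ∃ f ∈ F, (1 - 3 * a) * γ / 2 ≤
          (n : ℝ)⁻¹ * ∑ i, f (ω i).1 * ((ω i).2 - g (ω i))} :=
        add_le_add_left (measure_union_le _ _) _
    _ = P {ω | (n:ℝ) * t ≤ X ω} +
        P {ω | ∃ f ∈ F, (1 - 3 * a) * γ / 2 ≤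
          (n : ℝ)⁻¹ * ∑ i, f (ω i).1 * ((ω i).2 - g (ω i))} := by
        rw [hGbad, add_zero]
    _ ≤ ENNReal.ofReal (2 * Real.exp (-(n * a ^ 2 * γ ^ 2 / 8))) +
        P {ω | ∃ f ∈ F, (1 - 3 * a) * γ / 2 ≤
          (n : ℝ)⁻¹ * ∑ i, f (ω i).1 * ((ω i).2 - g (ω i))} :=
        add_le_add_left hDbound _
end

section
/- Let μ be a probability distribution on ℝ^m × {−1, +1} whose input marginal is c-isoperimetric: for every L-Lipschitz function f : ℝ^m → ℝ and every t > 0, P(|f(x) − E_μ[f]| ≥ t) ≤ 2 exp(−m t² / (2 c L²)). Let g(x) = E[y | x] and z(x, y) = y − g(x). Let (x_1, y_1), …, (x_n, y_n) be i.i.d. samples from μ, and let ℱ be a finite family of L-Lipschitz functions f : ℝ^m → [−1, 1]. Let γ ≥ 0, a ∈ (0, 1), and a₁, a₂ > 0 with a₁ + a₂ = (1 − 3a)/2. Then P( ∃ f ∈ ℱ : (1/n) Σ_{i=1}^n z(x_i, y_i) f(x_i) ≥ (1 − 3a) γ / 2 ) ≤ 2 |ℱ| exp( − n m a₁² γ²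 / (144 c L²) ) + 2 exp( − n a₂² γ² / 8 ). -/
open MeasureTheory
open scoped BigOperators ENNReal Nat
open Real Set NormedSpace
set_option maxHeartbeats 2000000

lemma chernoff_pi {α : Type*} [MeasurableSpace α] (μ : Measure α) [IsProbabilityMeasure μ]
    (n : ℕ) (W : α → ℝ) (hW : Measurable W) (B : ℝ) (hB : ∀ᵐ a ∂μ, W a ≤ B)
    (l s M : ℝ) (hl : 0 ≤ l) (hM : ∫ a, Real.exp (l * W a) ∂μ ≤ M) :
    (Measure.pi fun _ : Fin n => μ) {ω | s ≤ ∑ i, W (ω i)} ≤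
      ENNReal.ofReal (Real.exp (-(l * s)) * M ^ n) := by
  letI : MeasureSpace α := ⟨μ⟩
  have hvol : (volume : Measure α) = μ := rfl
  have hint1 : Integrable (fun a => Real.exp (l * W a)) μ := by
    refine (integrable_const (Real.exp (l * B))).mono' ?_ ?_
    · exact ((hW.const_mul l).exp).aestronglyMeasurable
    · filter_upwards [hB] with a ha
      rw [Real.norm_eq_abs, abs_of_pos (Real.exp_pos _)]
      exact Real.exp_le_exp.2 (mul_le_mul_of_nonneg_left ha hl)
  have hMnn : (0:ℝ) ≤ M := le_trans (integral_nonneg fun a => (Real.exp_pos _).le) hM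
  set pp : Measure (Fin n → α) := Measure.pi fun _ : Fin n => μ with hpp
  have hppvol : pp = (volume : Measure (Fin n → α)) := by
    rw [hpp]; rfl
  set G : (Fin n → α) → ℝ := fun ω => ∏ i, Real.exp (l * W (ω i)) with hG
  have hGint : Integrable G pp := by
    rw [hppvol]
    exact Integrable.fintype_prod (𝕜 := ℝ) (f := fun (_ : Fin n) (a : α) => Real.exp (l * W a)) (fun i => hint1)
  have hGnn : 0 ≤ᵐ[pp] G := Filter.Eventually.of_forall fun ω =>
    Finset.prod_nonneg fun i _ => (Real.exp_pos _).le
  have hGval : ∫ ω, G ω ∂pp = (∫ a, Real.exp (l * W a) ∂μ) ^ n := by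
    rw [hppvol, hG]
    have := integral_fintype_prod_eq_pow (ι := Fin n) (μ := μ) (fun a => Real.exp (l * W a))
    rw [Fintype.card_fin] at this
    exact this
  have hsub : {ω : Fin n → α | s ≤ ∑ i, W (ω i)} ⊆ {ω | Real.exp (l * s) ≤ G ω} := by
    intro ω hω
    simp only [Set.mem_setOf_eq] at hω ⊢
    have : Real.exp (l * s) ≤ Real.exp (l * ∑ i, W (ω i)) :=
      Real.exp_le_exp.2 (mul_le_mul_of_nonneg_left hω hl)
    refine this.trans_eq ?_
    rw [Finset.mul_sum, Real.exp_sum]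
  have hmarkov := mul_meas_ge_le_integral_of_nonneg hGnn hGint (Real.exp (l * s))
  have hlt : pp {ω | Real.exp (l * s) ≤ G ω} ≠ ⊤ := by
    have : IsProbabilityMeasure pp := by rw [hpp]; infer_instance
    exact (measure_lt_top pp _).ne
  have key : pp {ω | Real.exp (l * s) ≤ G ω} ≤ ENNReal.ofReal (Real.exp (-(l*s)) * M ^ n) := by
    rw [← ENNReal.ofReal_toReal hlt]
    apply ENNReal.ofReal_le_ofReal
    have h2 : (pp {ω | Real.exp (l * s) ≤ G ω}).toReal ≤ Real.exp (-(l*s)) * ∫ ω, G ω ∂pp := by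
      rw [Real.exp_neg]
      have := (le_div_iff₀' (Real.exp_pos (l*s))).2 hmarkov
      simpa [div_eq_inv_mul, Measure.real] using this
    refine h2.trans ?_
    rw [hGval]
    have := pow_le_pow_left₀ (integral_nonneg fun a => (Real.exp_pos _).le) hM n
    exact mul_le_mul_of_nonneg_left this (Real.exp_pos _).le
  exact le_trans (measure_mono hsub) key

lemma two_pow_le_centralBinom (j : ℕ) : 2 ^ j * (j.factorial * j.factorial) ≤ (2*j).factorial := by
  induction j with
  | zero => simp
  | succ j ih =>
    have h1 : (2*(j+1)).factorial = ((2*j+2) * (2*j+1)) * (2*j).factorial := by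
      have : 2*(j+1) = (2*j+1) + 1 := by ring
      rw [this, Nat.factorial_succ]
      have : 2*j+1+1 = 2*j+2 := by ring
      rw [this, Nat.factorial_succ]; ring
    have h2 : 2 ^ (j+1) * ((j+1).factorial * (j+1).factorial)
        = (2*(j+1)*(j+1)) * (2 ^ j * (j.factorial * j.factorial)) := by
      simp [Nat.factorial_succ]; ring
    rw [h1, h2]
    calc (2*(j+1)*(j+1)) * (2 ^ j * (j.factorial * j.factorial))
        ≤ (2*(j+1)*(j+1)) * (2*j).factorial := Nat.mul_le_mul_left _ ih
      _ ≤ ((2*j+2) * (2*j+1)) * (2*j).factorial := by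
          apply Nat.mul_le_mul_right
          nlinarith

lemma mgf_bound {α : Type*} [MeasurableSpace α] (μ : Measure α) [IsProbabilityMeasure μ]
    (W : α → ℝ) (hW : Measurable W) (B : ℝ) (hB : ∀ᵐ a ∂μ, |W a| ≤ B)
    (hmean : ∫ a, W a ∂μ = 0) (β : ℝ) (hβ : 0 < β)
    (hmom : ∀ j : ℕ, 1 ≤ j → ∫ a, (W a)^(2*j) ∂μ ≤ 2 * (Nat.factorial j) * β ^ j)
    (l : ℝ) : ∫ a, Real.exp (l * W a) ∂μ ≤ Real.exp (2 * β * l ^ 2) := by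
  have hBnn : 0 ≤ B := by
    by_contra h
    push_neg at h
    obtain ⟨a, ha⟩ := hB.exists
    exact absurd (le_trans (abs_nonneg _) ha) (not_le.2 h)
  -- integrability facts
  have hWint : Integrable W μ := by
    refine (integrable_const B).mono' hW.aestronglyMeasurable ?_
    filter_upwards [hB] with a ha using by rwa [Real.norm_eq_abs]
  have hexp_int : Integrable (fun a => Real.exp (l * W a)) μ := by
    refine (integrable_const (Real.exp (|l| * B))).mono' ((hW.const_mul l).exp).aestronglyMeasurable ?_
    filter_upwards [hB] with a ha
    rw [Real.norm_eq_abs, abs_of_pos (Real.exp_pos _)]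
    apply Real.exp_le_exp.2
    calc l * W a ≤ |l * W a| := le_abs_self _
      _ = |l| * |W a| := abs_mul _ _
      _ ≤ |l| * B := by exact mul_le_mul_of_nonneg_left ha (abs_nonneg _)
  have hcosh_int : Integrable (fun a => Real.cosh (l * W a)) μ := by
    refine (integrable_const (Real.cosh (|l| * B))).mono' ((hW.const_mul l).cosh).aestronglyMeasurable ?_
    filter_upwards [hB] with a ha
    rw [Real.norm_eq_abs, abs_of_pos (by positivity)]
    rw [Real.cosh_le_cosh, abs_mul, abs_of_nonneg (by positivity : (0:ℝ) ≤ |l| * B)]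
    exact mul_le_mul_of_nonneg_left ha (abs_nonneg _)
  -- Step 1 : ∫ exp(l W) ≤ 2 ∫ cosh (l W) - 1
  have step1 : ∫ a, Real.exp (l * W a) ∂μ ≤ 2 * ∫ a, Real.cosh (l * W a) ∂μ - 1 := by
    have hpt : ∀ a, Real.exp (l * W a) ≤ l * W a - 1 + 2 * Real.cosh (l * W a) := by
      intro a
      set x := l * W a
      have h2 : 2 * Real.cosh x = Real.exp x + Real.exp (-x) := by
        rw [Real.cosh_eq]; ring
      have h3 := Real.add_one_le_exp (-x)
      nlinarith [h3]
    have hA : Integrable (fun a => l * W a - 1) μ := by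
      exact (hWint.const_mul l).sub (integrable_const 1)
    have hint2 : Integrable (fun a => l * W a - 1 + 2 * Real.cosh (l * W a)) μ := by
      exact hA.add (hcosh_int.const_mul 2)
    have := integral_mono hexp_int hint2 hpt
    calc ∫ a, Real.exp (l * W a) ∂μ ≤ ∫ a, (l * W a - 1 + 2 * Real.cosh (l * W a)) ∂μ := this
      _ = l * ∫ a, W a ∂μ - 1 + 2 * ∫ a, Real.cosh (l * W a) ∂μ := by
          rw [integral_add hA (hcosh_int.const_mul 2),
            integral_sub (hWint.const_mul l) (integrable_const 1), integral_const_mul,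
            integral_const_mul]
          simp
      _ = 2 * ∫ a, Real.cosh (l * W a) ∂μ - 1 := by rw [hmean]; ring
  -- Step 2 : ∫ cosh (l W) ≤ 2 exp x - 1  with x = β l^2 / 2
  set x : ℝ := β * l ^ 2 / 2 with hx
  have hxnn : 0 ≤ x := by positivity
  have step2 : ∫ a, Real.cosh (l * W a) ∂μ ≤ 2 * Real.exp x - 1 := by
    have hnn : 0 ≤ᵐ[μ] fun a => Real.cosh (l * W a) :=
      Filter.Eventually.of_forall fun a => (Real.cosh_pos _).le
    have heq : ∫ a, Real.cosh (l * W a) ∂μ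
        = (∫⁻ a, ENNReal.ofReal (Real.cosh (l * W a)) ∂μ).toReal :=
      integral_eq_lintegral_of_nonneg_ae hnn ((hW.const_mul l).cosh).aestronglyMeasurable
    set T : ℕ → α → ℝ≥0∞ :=
      fun j a => ENNReal.ofReal ((l * W a) ^ (2*j) / (2*j).factorial) with hT
    have hpt : ∀ a, ENNReal.ofReal (Real.cosh (l * W a)) = ∑' j, T j a := by
      intro a
      rw [Real.cosh_eq_tsum]
      exact ENNReal.ofReal_tsum_of_nonneg
        (fun j => div_nonneg ((even_two_mul j).pow_nonneg _) (Nat.cast_nonneg _))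
        (Real.hasSum_cosh _).summable
    have hlin : ∫⁻ a, ENNReal.ofReal (Real.cosh (l * W a)) ∂μ = ∑' j, ∫⁻ a, T j a ∂μ := by
      simp_rw [hpt]
      exact lintegral_tsum fun j =>
        ((((hW.const_mul l).pow_const (2*j)).div_const _).ennreal_ofReal).aemeasurable
    -- the comparison sequence
    set b : ℕ → ℝ := fun j => if j = 0 then 1 else 2 * x ^ j / j.factorial with hb
    have hbnn : ∀ j, 0 ≤ b j := by
      intro j
      rw [hb]
      by_cases h : j = 0 <;> simp [h] <;> positivity
    have hble : ∀ j, b j ≤ 2 * (x ^ j / j.factorial) := by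
      intro j
      rw [hb]
      by_cases h : j = 0
      · simp [h]
      · simp only [h, if_false]; rw [mul_div_assoc]
    have hbsum : Summable b :=
      Summable.of_nonneg_of_le hbnn hble ((Real.summable_pow_div_factorial x).mul_left 2)
    -- termwise bound
    have hterm : ∀ j, ∫⁻ a, T j a ∂μ ≤ ENNReal.ofReal (b j) := by
      intro j
      have hint : Integrable (fun a => (l * W a) ^ (2*j) / (2*j).factorial) μ := by
        refine (integrable_const ((|l| * B) ^ (2*j) / (2*j).factorial)).mono'
          ((((hW.const_mul l).pow_const (2*j)).div_const _)).aestronglyMeasurable ?_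
        filter_upwards [hB] with a ha
        rw [Real.norm_eq_abs, abs_div, abs_pow, abs_mul, Nat.abs_cast]
        gcongr <;> first
          | positivity
          | exact mul_le_mul_of_nonneg_left ha (abs_nonneg l)
      have h1 : ∫⁻ a, T j a ∂μ
          = ENNReal.ofReal (∫ a, (l * W a) ^ (2*j) / (2*j).factorial ∂μ) := by
        rw [hT]
        exact (ofReal_integral_eq_lintegral_ofReal hint
          (Filter.Eventually.of_forall fun a =>
            div_nonneg ((even_two_mul j).pow_nonneg _) (Nat.cast_nonneg _))).symm
      rw [h1]
      apply ENNReal.ofReal_le_ofReal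
      have hval : ∫ a, (l * W a) ^ (2*j) / (2*j).factorial ∂μ
          = (l ^ (2*j) * ∫ a, (W a) ^ (2*j) ∂μ) / (2*j).factorial := by
        simp_rw [mul_pow]
        rw [integral_div, integral_const_mul]
      rw [hval]
      by_cases h : j = 0
      · subst h; simp [hb]
      · have hj : 1 ≤ j := Nat.one_le_iff_ne_zero.2 h
        rw [hb]; simp only [h, if_false]
        have hm := hmom j hj
        have h2 : l ^ (2*j) * ∫ a, (W a) ^ (2*j) ∂μ
            ≤ l ^ (2*j) * (2 * (Nat.factorial j) * β ^ j) := by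
          apply mul_le_mul_of_nonneg_left hm
          rw [pow_mul]
          exact pow_nonneg (sq_nonneg l) j
        refine (div_le_div_of_nonneg_right h2 (by positivity)).trans ?_
        -- l^(2j) * (2 j! β^j) / (2j)! ≤ 2 x^j / j!
        rw [hx]
        have hfact := two_pow_le_centralBinom j
        have hfact' : (2:ℝ) ^ j * ((j.factorial : ℝ) * j.factorial) ≤ ((2*j).factorial : ℝ) := by
          exact_mod_cast hfact
        rw [div_le_div_iff₀ (by positivity) (by positivity)]
        have hlhs : l ^ (2*j) * (2 * (Nat.factorial j) * β ^ j) * (j.factorial : ℝ)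
            = (2 * (β * l^2)^j) * ((j.factorial:ℝ) * j.factorial) := by
          rw [mul_pow, pow_mul]; ring
        have hrhs : 2 * (β * l ^ 2 / 2) ^ j * ((2*j).factorial : ℝ)
            = (2 * (β * l^2)^j) * (((2*j).factorial : ℝ) / 2 ^ j) := by
          rw [div_pow]; ring
        rw [hlhs, hrhs]
        apply mul_le_mul_of_nonneg_left ?_ (by positivity)
        rw [le_div_iff₀ (by positivity)]
        calc (j.factorial:ℝ) * j.factorial * 2 ^ j
            = (2:ℝ)^j * ((j.factorial:ℝ) * j.factorial) := by ring
          _ ≤ _ := hfact'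
    -- sum the bounds
    have hsum : ∑' j, ∫⁻ a, T j a ∂μ ≤ ENNReal.ofReal (2 * Real.exp x - 1) := by
      calc ∑' j, ∫⁻ a, T j a ∂μ ≤ ∑' j, ENNReal.ofReal (b j) := ENNReal.tsum_le_tsum hterm
        _ = ENNReal.ofReal (∑' j, b j) := (ENNReal.ofReal_tsum_of_nonneg hbnn hbsum).symm
        _ = ENNReal.ofReal (2 * Real.exp x - 1) := by
          congr 1
          have hexpsum : Real.exp x = ∑' n : ℕ, x ^ n / n.factorial := by
            rw [Real.exp_eq_exp_ℝ, exp_eq_tsum_div]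
          have hsummable : Summable (fun n : ℕ => x ^ n / n.factorial) :=
            Real.summable_pow_div_factorial x
          have e1 : ∑' j, b j = b 0 + ∑' j, b (j+1) := Summable.tsum_eq_zero_add hbsum
          have e2 : ∑' n : ℕ, x ^ n / n.factorial
              = 1 + ∑' j, x ^ (j+1) / (j+1).factorial := by
            rw [Summable.tsum_eq_zero_add hsummable]; simp
          have e3 : ∑' j, b (j+1) = 2 * ∑' j, x ^ (j+1) / (j+1).factorial := by
            rw [← tsum_mul_left]
            congr 1; funext j
            rw [hb]; simp [mul_div_assoc]
          have hb0 : b 0 = 1 := by simp [hb]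
          have h4 : ∑' j, x ^ (j+1) / (j+1).factorial = Real.exp x - 1 := by
            rw [hexpsum, e2]; ring
          rw [e1, e3, h4, hb0]
          ring
    rw [heq, hlin]
    have hfin : ENNReal.ofReal (2 * Real.exp x - 1) ≠ ⊤ := ENNReal.ofReal_ne_top
    calc (∑' j, ∫⁻ a, T j a ∂μ).toReal ≤ (ENNReal.ofReal (2 * Real.exp x - 1)).toReal :=
          ENNReal.toReal_mono hfin hsum
      _ = 2 * Real.exp x - 1 := ENNReal.toReal_ofReal (by nlinarith [Real.one_le_exp hxnn])
  calc ∫ a, Real.exp (l * W a) ∂μ ≤ 2 * (2 * Real.exp x - 1) - 1 := by linarith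
    _ = 4 * Real.exp x - 3 := by ring
    _ ≤ Real.exp x ^ 4 := by
        nlinarith [Real.one_le_exp hxnn, Real.exp_pos x, sq_nonneg (Real.exp x - 1),
          mul_nonneg (sq_nonneg (Real.exp x - 1)) (by positivity : (0:ℝ) ≤ Real.exp x ^ 2 + 2 * Real.exp x + 3)]
    _ = Real.exp (2 * β * l ^ 2) := by
        rw [← Real.exp_nat_mul]
        congr 1
        rw [hx]; ring

lemma moment_from_tail {α : Type*} [MeasurableSpace α] (ν : Measure α) [IsProbabilityMeasure ν]
    (V : α → ℝ) (hV : Measurable V) (hVb : ∀ a, |V a| ≤ 2)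
    (c0 : ℝ) (hc0 : 0 < c0)
    (htail : ∀ t : ℝ, 0 < t → ν {a | t ≤ |V a|} ≤ ENNReal.ofReal (2 * Real.exp (-(t^2/c0))))
    (j : ℕ) (hj : 1 ≤ j) :
    ∫ a, (V a) ^ (2*j) ∂ν ≤ 2 * (Nat.factorial j) * c0 ^ j := by
  have hjR : (0:ℝ) < (j:ℝ) := by exact_mod_cast hj
  have hjne : (j:ℝ) ≠ 0 := ne_of_gt hjR
  set g : ℝ → ℝ := fun t => Real.exp (-(t ^ ((j:ℝ))⁻¹ / c0)) with hg
  have hkey : ∀ x : ℝ, x ∈ Ioi (0:ℝ) → g (x ^ (j:ℝ)) = Real.exp (-(c0⁻¹ * x)) := by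
    intro x hx
    rw [hg]
    simp only []
    rw [← Real.rpow_mul (le_of_lt hx), mul_inv_cancel₀ hjne, Real.rpow_one]
    rw [div_eq_inv_mul]
  -- integrability of the Gamma-type integrand
  have hGint : IntegrableOn (fun x : ℝ => x ^ ((j:ℝ) - 1) * Real.exp (-(c0⁻¹ * x))) (Ioi 0) := by
    have h := integrableOn_rpow_mul_exp_neg_mul_rpow (s := (j:ℝ) - 1) (p := 1) (b := c0⁻¹)
      (by linarith) zero_lt_one (by positivity)
    refine h.congr_fun (fun x hx => ?_) measurableSet_Ioi
    beta_reduce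
    rw [Real.rpow_one, neg_mul]
  -- integrability of g on Ioi 0
  have hgint : IntegrableOn g (Ioi 0) := by
    rw [← integrableOn_Ioi_comp_rpow_iff' g hjne]
    refine hGint.congr_fun (fun x hx => ?_) measurableSet_Ioi
    rw [smul_eq_mul, hkey x hx]
  -- value of ∫ g over Ioi 0
  have hgval : ∫ t in Ioi 0, g t = (Nat.factorial j) * c0 ^ j := by
    rw [← integral_comp_rpow_Ioi g hjne]
    have e1 : ∫ x in Ioi 0, (|(j:ℝ)| * x ^ ((j:ℝ) - 1)) • g (x ^ (j:ℝ))
        = ∫ x in Ioi 0, (j:ℝ) * (x ^ ((j:ℝ) - 1) * Real.exp (-(c0⁻¹ * x))) := by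
      refine setIntegral_congr_fun measurableSet_Ioi (fun x hx => ?_)
      rw [smul_eq_mul, hkey x hx, abs_of_pos hjR, mul_assoc]
    rw [e1, integral_const_mul]
    have e2 : ∫ x in Ioi 0, x ^ ((j:ℝ) - 1) * Real.exp (-(c0⁻¹ * x))
        = (1/c0⁻¹) ^ ((j:ℝ)) * Real.Gamma (j:ℝ) :=
      Real.integral_rpow_mul_exp_neg_mul_Ioi hjR (by positivity)
    rw [e2]
    obtain ⟨k, rfl⟩ : ∃ k, j = k + 1 := ⟨j - 1, (Nat.succ_pred_eq_of_pos hj).symm⟩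
    rw [one_div, inv_inv]
    rw [show ((k + 1 : ℕ) : ℝ) = ((k:ℝ) + 1) by push_cast; ring]
    rw [Real.Gamma_nat_eq_factorial]
    rw [show ((k:ℝ) + 1) = ((k + 1 : ℕ) : ℝ) by push_cast; ring, Real.rpow_natCast]
    rw [Nat.factorial_succ]
    push_cast
    ring
  -- the layer-cake bound
  set X : α → ℝ := fun a => (V a) ^ (2*j) with hX
  have hXnn : 0 ≤ᵐ[ν] X := Filter.Eventually.of_forall fun a => (even_two_mul j).pow_nonneg _
  have hXint : Integrable X ν := by
    refine (integrable_const ((2:ℝ) ^ (2*j))).mono'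
      ((hV.pow_const (2*j))).aestronglyMeasurable ?_
    refine Filter.Eventually.of_forall fun a => ?_
    rw [Real.norm_eq_abs, ← pow_abs]
    exact pow_le_pow_left₀ (abs_nonneg _) (hVb a) _
  have hlayer : ∫ a, X a ∂ν = ∫ t in Ioi 0, ENNReal.toReal (ν {a | t ≤ X a}) :=
    hXint.integral_eq_integral_meas_le hXnn
  -- pointwise comparison on Ioi 0
  have hptw : ∀ t ∈ Ioi (0:ℝ), ENNReal.toReal (ν {a | t ≤ X a}) ≤ 2 * g t := by
    intro t ht
    have ht' : (0:ℝ) < t := ht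
    set z : ℝ := (((2*j : ℕ) : ℝ))⁻¹ with hz
    have h2j : ((2*j : ℕ) : ℝ) = 2 * (j:ℝ) := by push_cast; ring
    have hzpos : 0 < z := by rw [hz, h2j]; positivity
    have hsub : {a | t ≤ X a} ⊆ {a | t ^ z ≤ |V a|} := by
      intro a hat
      simp only [Set.mem_setOf_eq] at hat ⊢
      have h1 : t ≤ |V a| ^ (2*j) := by
        rw [(even_two_mul j).pow_abs]
        exact hat
      have h2 : t ^ z ≤ (|V a| ^ (2*j)) ^ z :=
        Real.rpow_le_rpow (le_of_lt ht') h1 (le_of_lt hzpos)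
      calc t ^ z ≤ (|V a| ^ (2*j)) ^ z := h2
        _ = |V a| := by
            rw [← Real.rpow_natCast |V a| (2*j), ← Real.rpow_mul (abs_nonneg _), hz,
              mul_inv_cancel₀ (by rw [h2j]; positivity), Real.rpow_one]
    have htz : (0:ℝ) < t ^ z := Real.rpow_pos_of_pos ht' z
    have hms := le_trans (measure_mono hsub) (htail (t ^ z) htz)
    have hsq : (t ^ z) ^ 2 = t ^ ((j:ℝ))⁻¹ := by
      rw [← Real.rpow_natCast (t ^ z) 2, ← Real.rpow_mul (le_of_lt ht'), hz, h2j]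
      congr 1
      rw [mul_inv]
      push_cast
      field_simp
    have : ν {a | t ≤ X a} ≤ ENNReal.ofReal (2 * g t) := by
      refine hms.trans (le_of_eq ?_)
      rw [hg, hsq]
    refine ENNReal.toReal_le_of_le_ofReal (by positivity) this
  -- integrate the comparison
  have hbig : ∫ t in Ioi 0, ENNReal.toReal (ν {a | t ≤ X a}) ≤ ∫ t in Ioi 0, 2 * g t := by
    refine integral_mono_of_nonneg ?_ (hgint.const_mul 2) ?_
    · exact Filter.Eventually.of_forall fun t => ENNReal.toReal_nonneg
    · exact (ae_restrict_iff' measurableSet_Ioi).2 (Filter.Eventually.of_forall hptw)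
  calc ∫ a, (V a) ^ (2*j) ∂ν = ∫ t in Ioi 0, ENNReal.toReal (ν {a | t ≤ X a}) := hlayer
    _ ≤ ∫ t in Ioi 0, 2 * g t := hbig
    _ = 2 * ((Nat.factorial j) * c0 ^ j) := by rw [integral_const_mul, hgval]
    _ = 2 * (Nat.factorial j) * c0 ^ j := by ring

lemma mgf_pm_two {α : Type*} [MeasurableSpace α] (μ : Measure α) [IsProbabilityMeasure μ]
    (z : α → ℝ) (hz : Measurable z) (hzb : ∀ᵐ a ∂μ, |z a| ≤ 2)
    (hzmean : ∫ a, z a ∂μ = 0) (l : ℝ) :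
    ∫ a, Real.exp (l * z a) ∂μ ≤ Real.exp (2 * l ^ 2) := by
  have hz_int : Integrable z μ := by
    refine (integrable_const (2:ℝ)).mono' hz.aestronglyMeasurable ?_
    filter_upwards [hzb] with a ha using by rwa [Real.norm_eq_abs]
  have hexp_int : Integrable (fun a => Real.exp (l * z a)) μ := by
    refine (integrable_const (Real.exp (|l| * 2))).mono'
      ((hz.const_mul l).exp).aestronglyMeasurable ?_
    filter_upwards [hzb] with a ha
    rw [Real.norm_eq_abs, abs_of_pos (Real.exp_pos _)]
    apply Real.exp_le_exp.2
    calc l * z a ≤ |l * z a| := le_abs_self _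
      _ = |l| * |z a| := abs_mul _ _
      _ ≤ |l| * 2 := mul_le_mul_of_nonneg_left ha (abs_nonneg _)
  have hpt : ∀ᵐ a ∂μ, Real.exp (l * z a)
      ≤ (Real.exp (-(2*l)) + Real.exp (2*l)) / 2 + z a * ((Real.exp (2*l) - Real.exp (-(2*l))) / 4) := by
    filter_upwards [hzb] with a ha
    have hub := le_abs_self (z a)
    have hlb := neg_abs_le (z a)
    have h1 : (0:ℝ) ≤ (2 - z a) / 4 := by linarith
    have h2 : (0:ℝ) ≤ (2 + z a) / 4 := by linarith
    have h3 : (2 - z a) / 4 + (2 + z a) / 4 = 1 := by ring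
    have hcvx := convexOn_exp.2 (Set.mem_univ (-(2*l))) (Set.mem_univ (2*l)) h1 h2 h3
    simp only [smul_eq_mul] at hcvx
    have harg : (2 - z a) / 4 * (-(2*l)) + (2 + z a) / 4 * (2*l) = l * z a := by ring
    rw [harg] at hcvx
    calc Real.exp (l * z a)
        ≤ (2 - z a) / 4 * Real.exp (-(2*l)) + (2 + z a) / 4 * Real.exp (2*l) := hcvx
      _ = (Real.exp (-(2*l)) + Real.exp (2*l)) / 2
          + z a * ((Real.exp (2*l) - Real.exp (-(2*l))) / 4) := by ring
  have hrhs_int : Integrable (fun a => (Real.exp (-(2*l)) + Real.exp (2*l)) / 2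
      + z a * ((Real.exp (2*l) - Real.exp (-(2*l))) / 4)) μ := by
    exact (integrable_const _).add (hz_int.mul_const _)
  calc ∫ a, Real.exp (l * z a) ∂μ
      ≤ ∫ a, ((Real.exp (-(2*l)) + Real.exp (2*l)) / 2
          + z a * ((Real.exp (2*l) - Real.exp (-(2*l))) / 4)) ∂μ :=
        integral_mono_ae hexp_int hrhs_int hpt
    _ = (Real.exp (-(2*l)) + Real.exp (2*l)) / 2 := by
        rw [integral_add (integrable_const _) (hz_int.mul_const _), integral_mul_const,
          hzmean, integral_const]
        simp
    _ = Real.cosh (2*l) := by rw [Real.cosh_eq]; ring_nf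
    _ ≤ Real.exp ((2*l)^2 / 2) := Real.cosh_le_exp_half_sq _
    _ = Real.exp (2 * l ^ 2) := by congr 1; ring

lemma meas_of_lip {E : Type*} [NormedAddCommGroup E] [MeasurableSpace E] [BorelSpace E]
    (f : E → ℝ) (L : ℝ) (h : ∀ x y : E, |f x - f y| ≤ L * ‖x - y‖) : Measurable f := by
  rcases subsingleton_or_nontrivial E with hE | hE
  · exact Subsingleton.measurable
  · have hL0 : 0 ≤ L := by
      obtain ⟨x, y, hxy⟩ := exists_pair_ne E
      have hpos : (0:ℝ) < ‖x - y‖ := by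
        rw [norm_pos_iff]; exact sub_ne_zero.2 hxy
      nlinarith [h x y, abs_nonneg (f x - f y)]
    have hlip : LipschitzWith (Real.toNNReal L) f := by
      apply LipschitzWith.of_dist_le_mul
      intro x y
      rw [Real.dist_eq, dist_eq_norm]
      calc |f x - f y| ≤ L * ‖x - y‖ := h x y
        _ = (Real.toNNReal L) * ‖x - y‖ := by rw [Real.coe_toNNReal _ hL0]
    exact hlip.continuous.measurable

/-- **Lemma 5.** Under `c`-isoperimetry of the input marginal, the
probability that some `L`-Lipschitz model in a finite family `F` correlates with the label
noise is bounded via concentration. -/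
theorem noise_correlation_probability_bound
    {E : Type*} [NormedAddCommGroup E] [MeasurableSpace E] [BorelSpace E]
    (μ : Measure (E × ℝ)) [IsProbabilityMeasure μ]
    (hlab : ∀ᵐ q ∂μ, q.2 = 1 ∨ q.2 = -1)
    (c : ℝ) (m : ℕ)
    (hiso : ∀ (f : E → ℝ) (L' : ℝ), (∀ x₁ x₂ : E, |f x₁ - f x₂| ≤ L' * ‖x₁ - x₂‖) →
      ∀ t : ℝ, 0 < t →
        (μ.map Prod.fst) {x : E | t ≤ |f x - ∫ x', f x' ∂(μ.map Prod.fst)|} ≤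
          ENNReal.ofReal (2 * Real.exp (-(m * t ^ 2 / (2 * c * L' ^ 2)))))
    (n : ℕ) (F : Finset (E → ℝ)) (L : ℝ)
    (hrange : ∀ f ∈ F, ∀ x : E, f x ∈ Set.Icc (-1 : ℝ) 1)
    (hLip : ∀ f ∈ F, ∀ x₁ x₂ : E, |f x₁ - f x₂| ≤ L * ‖x₁ - x₂‖)
    (γ : ℝ) (hγ : 0 ≤ γ)
    (a : ℝ) (ha : a ∈ Set.Ioo (0 : ℝ) 1)
    (a₁ a₂ : ℝ) (ha₁ : 0 < a₁) (ha₂ : 0 < a₂) (ha₁₂ : a₁ + a₂ = (1 - 3 * a) / 2) :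
    (Measure.pi fun _ : Fin n => μ)
        {ω | ∃ f ∈ F, (1 - 3 * a) * γ / 2 ≤
          (n : ℝ)⁻¹ * ∑ i, ((ω i).2 - condMean μ (ω i)) * f (ω i).1} ≤
      ENNReal.ofReal (2 * F.card * Real.exp (-(n * m * a₁ ^ 2 * γ ^ 2 / (144 * c * L ^ 2))))
        + ENNReal.ofReal (2 * Real.exp (-(n * a₂ ^ 2 * γ ^ 2 / 8))) := by
  classical
  -- trivial case : F empty
  rcases F.eq_empty_or_nonempty with hF | hFne
  · subst hF
    have : {ω : Fin n → E × ℝ | ∃ f ∈ (∅ : Finset (E → ℝ)), (1 - 3 * a) * γ / 2 ≤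
        (n : ℝ)⁻¹ * ∑ i, ((ω i).2 - condMean μ (ω i)) * f (ω i).1} = ∅ := by
      ext ω; simp
    rw [this, measure_empty]
    exact zero_le
  set pp := (Measure.pi fun _ : Fin n => μ) with hpp
  haveI : IsProbabilityMeasure pp := by rw [hpp]; infer_instance
  have hLHS1 : pp {ω | ∃ f ∈ F, (1 - 3 * a) * γ / 2 ≤
      (n : ℝ)⁻¹ * ∑ i, ((ω i).2 - condMean μ (ω i)) * f (ω i).1} ≤ 1 := prob_le_one
  -- degenerate case : n = 0 or γ = 0
  by_cases hdeg1 : n = 0 ∨ γ = 0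
  · refine le_trans hLHS1 ?_
    have hz : (n:ℝ) * a₂ ^ 2 * γ ^ 2 / 8 = 0 := by
      rcases hdeg1 with h | h <;> simp [h]
    have h1 : (1:ℝ≥0∞) ≤ ENNReal.ofReal (2 * Real.exp (-(n * a₂ ^ 2 * γ ^ 2 / 8))) := by
      rw [← ENNReal.ofReal_one]
      apply ENNReal.ofReal_le_ofReal
      rw [hz]
      norm_num
    exact le_add_left h1
  push_neg at hdeg1
  obtain ⟨hn0, hγ0⟩ := hdeg1
  have hn1 : 1 ≤ n := Nat.one_le_iff_ne_zero.2 hn0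
  have hγpos : 0 < γ := lt_of_le_of_ne hγ (Ne.symm hγ0)
  have hnR : (0:ℝ) < n := by exact_mod_cast hn1
  -- degenerate case : bad c, L, m
  by_cases hdeg2 : 0 < c ∧ L ≠ 0 ∧ 1 ≤ m
  swap
  · refine le_trans hLHS1 ?_
    have hX : n * m * a₁ ^ 2 * γ ^ 2 / (144 * c * L ^ 2) ≤ 0 := by
      by_cases hmz : m = 0
      · simp [hmz]
      by_cases hLz : L = 0
      · simp [hLz]
      have hc0 : ¬ 0 < c := by
        intro hcpos
        exact hdeg2 ⟨hcpos, hLz, Nat.one_le_iff_ne_zero.2 hmz⟩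
      push_neg at hc0
      rcases lt_or_eq_of_le hc0 with hlt | heq
      · apply div_nonpos_of_nonneg_of_nonpos
        · positivity
        · have hL2 : (0:ℝ) < L ^ 2 := by positivity
          nlinarith
      · rw [heq]
        simp
    have h1 : (1:ℝ≥0∞) ≤ ENNReal.ofReal (2 * F.card *
        Real.exp (-(n * m * a₁ ^ 2 * γ ^ 2 / (144 * c * L ^ 2)))) := by
      rw [← ENNReal.ofReal_one]
      apply ENNReal.ofReal_le_ofReal
      have hcard : (1:ℝ) ≤ F.card := by
        exact_mod_cast Nat.one_le_iff_ne_zero.2 (Finset.card_ne_zero.2 hFne)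
      have hexp : (1:ℝ) ≤ Real.exp (-(n * m * a₁ ^ 2 * γ ^ 2 / (144 * c * L ^ 2))) := by
        rw [← Real.exp_zero]
        exact Real.exp_le_exp.2 (by linarith)
      nlinarith
    exact le_add_right h1
  obtain ⟨hc, hL, hm1⟩ := hdeg2
  have hmR : (0:ℝ) < m := by exact_mod_cast hm1
  have hL2 : (0:ℝ) < L ^ 2 := lt_of_le_of_ne (sq_nonneg L) (Ne.symm (pow_ne_zero 2 hL))
  -- setup
  have hm : (MeasurableSpace.comap (Prod.fst : E × ℝ → E) inferInstance) ≤
      (inferInstance : MeasurableSpace (E × ℝ)) := measurable_fst.comap_le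
  haveI : SigmaFinite (μ.trim hm) := inferInstance
  set Y : E × ℝ → ℝ := fun q => q.2 with hY
  set z : E × ℝ → ℝ := fun q => q.2 - condMean μ q with hzdef
  have hcm : condMean μ = μ[Y | MeasurableSpace.comap Prod.fst inferInstance] := rfl
  have hgsm : StronglyMeasurable (condMean μ) := by
    rw [hcm]; exact stronglyMeasurable_condExp.mono hm
  have hzmeas : Measurable z := measurable_snd.sub hgsm.measurable
  have hy_int : Integrable Y μ := by
    refine (integrable_const (1:ℝ)).mono' measurable_snd.aestronglyMeasurable ?_
    filter_upwards [hlab] with q hq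
    rcases hq with h | h <;> rw [hY] <;> simp [h]
  have hgb : ∀ᵐ q ∂μ, |condMean μ q| ≤ 1 := by
    have h1 : Y ≤ᵐ[μ] fun _ => (1:ℝ) := by
      filter_upwards [hlab] with q hq; rcases hq with h | h <;> rw [hY] <;> simp [h]
    have h2 : (fun _ => (-1:ℝ)) ≤ᵐ[μ] Y := by
      filter_upwards [hlab] with q hq; rcases hq with h | h <;> rw [hY] <;> simp [h]
    have hub := condExp_mono (m := MeasurableSpace.comap (Prod.fst : E × ℝ → E) inferInstance)
      hy_int (integrable_const (1:ℝ)) h1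
    have hlb := condExp_mono (m := MeasurableSpace.comap (Prod.fst : E × ℝ → E) inferInstance)
      (integrable_const (-1:ℝ)) hy_int h2
    rw [condExp_const hm] at hub hlb
    filter_upwards [hub, hlb] with q hu hl
    rw [hcm]
    exact abs_le.2 ⟨hl, hu⟩
  have hzb : ∀ᵐ q ∂μ, |z q| ≤ 2 := by
    filter_upwards [hlab, hgb] with q hq hg
    have h1 : |q.2| ≤ 1 := by rcases hq with h | h <;> simp [h]
    rw [hzdef]
    calc |q.2 - condMean μ q| ≤ |q.2| + |condMean μ q| := abs_sub _ _
      _ ≤ 2 := by linarith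
  have hz_int : Integrable z μ := by
    rw [hzdef, hcm]
    exact hy_int.sub integrable_condExp
  have hzmean : ∫ q, z q ∂μ = 0 := by
    rw [hzdef, hcm]
    rw [integral_sub hy_int integrable_condExp, integral_condExp hm, sub_self]
  have hcondz : μ[z | MeasurableSpace.comap Prod.fst inferInstance] =ᵐ[μ] 0 := by
    have h1 : μ[Y - μ[Y | MeasurableSpace.comap Prod.fst inferInstance] |
          MeasurableSpace.comap Prod.fst inferInstance]
        =ᵐ[μ] μ[Y | MeasurableSpace.comap Prod.fst inferInstance]
          - μ[μ[Y | MeasurableSpace.comap Prod.fst inferInstance] |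
              MeasurableSpace.comap Prod.fst inferInstance] :=
      condExp_sub hy_int integrable_condExp _
    have h2 := condExp_condExp_of_le (le_refl (MeasurableSpace.comap (Prod.fst : E × ℝ → E)
      inferInstance)) hm (f := Y) (μ := μ)
    have hzY : z = Y - μ[Y | MeasurableSpace.comap Prod.fst inferInstance] := by
      funext q; rw [hzdef, hcm]; rfl
    rw [hzY]
    filter_upwards [h1, h2] with q hq1 hq2
    simp only [Pi.sub_apply, Pi.zero_apply] at hq1 hq2 ⊢
    rw [hq1, hq2, sub_self]
  have hcorr : ∀ f : E → ℝ, Measurable f → (∀ x, |f x| ≤ 1) →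
      ∫ q, f q.1 * z q ∂μ = 0 := by
    intro f hf hfb
    have hF1m : Measurable[MeasurableSpace.comap (Prod.fst : E × ℝ → E) inferInstance]
        (fun q : E × ℝ => f q.1) := hf.comp (Measurable.of_comap_le le_rfl)
    have hmul_int : Integrable (fun q => f q.1 * z q) μ := by
      refine (integrable_const (2:ℝ)).mono'
        (((hf.comp measurable_fst).mul hzmeas)).aestronglyMeasurable ?_
      filter_upwards [hzb] with q hq
      rw [Real.norm_eq_abs, abs_mul]
      calc |f q.1| * |z q| ≤ 1 * 2 := mul_le_mul (hfb q.1) hq (abs_nonneg _) zero_le_one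
        _ = 2 := by norm_num
    have hkey := condExp_stronglyMeasurable_mul_of_bound hm hF1m.stronglyMeasurable hz_int 1
      (Filter.Eventually.of_forall fun q => by
        rw [Real.norm_eq_abs]; exact hfb q.1)
    calc ∫ q, f q.1 * z q ∂μ
        = ∫ q, (μ[(fun q => f q.1) * z | MeasurableSpace.comap Prod.fst inferInstance]) q ∂μ :=
          (integral_condExp hm).symm
      _ = 0 := by
          have hzero : μ[(fun q => f q.1) * z | MeasurableSpace.comap Prod.fst inferInstance]
              =ᵐ[μ] 0 := by
            filter_upwards [hkey, hcondz] with q h1 h2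
            rw [h1]
            simp only [Pi.mul_apply, Pi.zero_apply] at h2 ⊢
            rw [h2, mul_zero]
          rw [integral_congr_ae hzero]; simp
  -- constants
  set c0 : ℝ := 2 * c * L ^ 2 / m with hc0def
  have hc0 : 0 < c0 := by rw [hc0def]; apply div_pos (by nlinarith) hmR
  set β : ℝ := 4 * c0 with hβdef
  have hβ : 0 < β := by rw [hβdef]; linarith
  -- Part B : bounds for the z-average events
  set l₁ : ℝ := a₂ * γ / 4 with hl₁def
  have hl₁nn : 0 ≤ l₁ := by rw [hl₁def]; positivity
  have hBexp : Real.exp (-(l₁ * ((n:ℝ) * (a₂ * γ)))) * Real.exp (2 * l₁ ^ 2) ^ n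
      = Real.exp (-(n * a₂ ^ 2 * γ ^ 2 / 8)) := by
    rw [← Real.exp_nat_mul, ← Real.exp_add]
    congr 1
    rw [hl₁def]
    ring
  have hBplus : pp {ω | (n:ℝ) * (a₂ * γ) ≤ ∑ i, z (ω i)} ≤
      ENNReal.ofReal (Real.exp (-(n * a₂ ^ 2 * γ ^ 2 / 8))) := by
    have := chernoff_pi μ n z hzmeas 2
      (by filter_upwards [hzb] with q h using (abs_le.1 h).2)
      l₁ ((n:ℝ) * (a₂ * γ)) (Real.exp (2 * l₁ ^ 2)) hl₁nn
      (mgf_pm_two μ z hzmeas hzb hzmean l₁)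
    rw [hpp, ← hBexp]
    exact this
  have hBminus : pp {ω | (n:ℝ) * (a₂ * γ) ≤ ∑ i, -(z (ω i))} ≤
      ENNReal.ofReal (Real.exp (-(n * a₂ ^ 2 * γ ^ 2 / 8))) := by
    have hmean' : ∫ q, -(z q) ∂μ = 0 := by rw [integral_neg, hzmean, neg_zero]
    have hzb' : ∀ᵐ q ∂μ, |(-(z q))| ≤ 2 := by
      filter_upwards [hzb] with q h; rwa [abs_neg]
    have := chernoff_pi μ n (fun q => -(z q)) hzmeas.neg 2
      (by filter_upwards [hzb'] with q h using (abs_le.1 h).2)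
      l₁ ((n:ℝ) * (a₂ * γ)) (Real.exp (2 * l₁ ^ 2)) hl₁nn
      (mgf_pm_two μ (fun q => -(z q)) hzmeas.neg hzb' hmean' l₁)
    rw [hpp, ← hBexp]
    exact this
  -- Part A : per-function bounds
  set l₀ : ℝ := a₁ * γ / (4 * β) with hl₀def
  have hl₀nn : 0 ≤ l₀ := by rw [hl₀def]; positivity
  have hA : ∀ f ∈ F, pp {ω | (n:ℝ) * (a₁ * γ) ≤
      ∑ i, z (ω i) * (f (ω i).1 - ∫ x, f x ∂(μ.map Prod.fst))} ≤
      ENNReal.ofReal (Real.exp (-(n * m * a₁ ^ 2 * γ ^ 2 / (144 * c * L ^ 2)))) := by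
    intro f hfF
    have hfm : Measurable f := meas_of_lip f L (hLip f hfF)
    have hfb : ∀ x, |f x| ≤ 1 := fun x =>
      abs_le.2 ⟨(hrange f hfF x).1, (hrange f hfF x).2⟩
    haveI : IsProbabilityMeasure (μ.map (Prod.fst : E × ℝ → E)) :=
      Measure.isProbabilityMeasure_map measurable_fst.aemeasurable
    set Ef : ℝ := ∫ x, f x ∂(μ.map Prod.fst) with hEfdef
    have hEfb : |Ef| ≤ 1 := by
      rw [hEfdef]
      have hn := norm_integral_le_of_norm_le_const (μ := μ.map Prod.fst) (C := 1)
        (Filter.Eventually.of_forall fun x => by rw [Real.norm_eq_abs]; exact hfb x)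
      rw [Real.norm_eq_abs] at hn
      simpa using hn
    set V : E → ℝ := fun x => f x - Ef with hVdef
    have hVm : Measurable V := hfm.sub measurable_const
    have hVb : ∀ x, |V x| ≤ 2 := by
      intro x
      rw [hVdef]
      calc |f x - Ef| ≤ |f x| + |Ef| := abs_sub _ _
        _ ≤ 2 := by linarith [hfb x]
    have htail : ∀ t : ℝ, 0 < t → (μ.map Prod.fst) {x | t ≤ |V x|} ≤
        ENNReal.ofReal (2 * Real.exp (-(t ^ 2 / c0))) := by
      intro t ht
      have hisof := hiso f L (hLip f hfF) t ht
      have heq2 : (m:ℝ) * t ^ 2 / (2 * c * L ^ 2) = t ^ 2 / c0 := by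
        rw [hc0def]
        field_simp
      rw [← heq2]
      exact hisof
    have hmomV : ∀ j : ℕ, 1 ≤ j → ∫ x, (V x) ^ (2*j) ∂(μ.map Prod.fst) ≤
        2 * (Nat.factorial j) * c0 ^ j :=
      fun j hj => moment_from_tail (μ.map Prod.fst) V hVm hVb c0 hc0 htail j hj
    set W : E × ℝ → ℝ := fun q => z q * (f q.1 - Ef) with hWdef
    have hWm : Measurable W := hzmeas.mul ((hfm.comp measurable_fst).sub measurable_const)
    have hWb : ∀ᵐ q ∂μ, |W q| ≤ 4 := by
      filter_upwards [hzb] with q hq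
      rw [hWdef, abs_mul]
      have h2 := hVb q.1
      rw [hVdef] at h2
      calc |z q| * |f q.1 - Ef| ≤ 2 * 2 :=
            mul_le_mul hq h2 (abs_nonneg _) (by norm_num)
        _ = 4 := by norm_num
    have hWmean : ∫ q, W q ∂μ = 0 := by
      have hint1 : Integrable (fun q => f q.1 * z q) μ := by
        refine (integrable_const (2:ℝ)).mono'
          (((hfm.comp measurable_fst).mul hzmeas)).aestronglyMeasurable ?_
        filter_upwards [hzb] with q hq
        rw [Real.norm_eq_abs, abs_mul]
        calc |f q.1| * |z q| ≤ 1 * 2 := mul_le_mul (hfb q.1) hq (abs_nonneg _) zero_le_one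
          _ = 2 := by norm_num
      have hsplit : ∫ q, W q ∂μ = ∫ q, f q.1 * z q ∂μ - Ef * ∫ q, z q ∂μ := by
        rw [← integral_const_mul, ← integral_sub hint1 (hz_int.const_mul Ef)]
        congr 1
        funext q
        rw [hWdef]
        ring
      rw [hsplit, hcorr f hfm hfb, hzmean]
      ring
    have hmomW : ∀ j : ℕ, 1 ≤ j → ∫ q, (W q) ^ (2*j) ∂μ ≤
        2 * (Nat.factorial j) * β ^ j := by
      intro j hj
      have hVpow_int : Integrable (fun q : E × ℝ => (4:ℝ)^j * (V q.1) ^ (2*j)) μ := by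
        refine (integrable_const ((4:ℝ)^j * 2 ^ (2*j))).mono'
          ((((hVm.comp measurable_fst).pow_const (2*j)).const_mul _)).aestronglyMeasurable ?_
        refine Filter.Eventually.of_forall fun q => ?_
        rw [Real.norm_eq_abs, abs_mul, abs_of_nonneg (by positivity : (0:ℝ) ≤ (4:ℝ)^j), abs_pow]
        exact mul_le_mul_of_nonneg_left
          (pow_le_pow_left₀ (abs_nonneg _) (hVb q.1) _) (by positivity)
      have hWpow_int : Integrable (fun q => (W q) ^ (2*j)) μ := by
        refine (integrable_const ((4:ℝ) ^ (2*j))).mono'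
          ((hWm.pow_const (2*j))).aestronglyMeasurable ?_
        filter_upwards [hWb] with q hq
        rw [Real.norm_eq_abs, abs_pow]
        exact pow_le_pow_left₀ (abs_nonneg _) hq _
      have hptw : ∀ᵐ q ∂μ, (W q) ^ (2*j) ≤ (4:ℝ)^j * (V q.1) ^ (2*j) := by
        filter_upwards [hzb] with q hq
        have e : (W q) ^ (2*j) = (z q) ^ (2*j) * (V q.1) ^ (2*j) := by
          rw [hWdef, hVdef, mul_pow]
        rw [e]
        refine mul_le_mul_of_nonneg_right ?_ ((even_two_mul j).pow_nonneg _)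
        calc (z q) ^ (2*j) = |z q| ^ (2*j) := ((even_two_mul j).pow_abs _).symm
          _ ≤ 2 ^ (2*j) := pow_le_pow_left₀ (abs_nonneg _) hq _
          _ = 4 ^ j := by rw [pow_mul]; norm_num
      have hmap : ∫ q, (V q.1) ^ (2*j) ∂μ = ∫ x, (V x) ^ (2*j) ∂(μ.map Prod.fst) :=
        (integral_map measurable_fst.aemeasurable
          ((hVm.pow_const (2*j))).aestronglyMeasurable).symm
      calc ∫ q, (W q) ^ (2*j) ∂μ
          ≤ ∫ q, (4:ℝ)^j * (V q.1) ^ (2*j) ∂μ := integral_mono_ae hWpow_int hVpow_int hptw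
        _ = (4:ℝ)^j * ∫ x, (V x) ^ (2*j) ∂(μ.map Prod.fst) := by
            rw [integral_const_mul, hmap]
        _ ≤ (4:ℝ)^j * (2 * (Nat.factorial j) * c0 ^ j) :=
            mul_le_mul_of_nonneg_left (hmomV j hj) (by positivity)
        _ = 2 * (Nat.factorial j) * β ^ j := by rw [hβdef, mul_pow]; ring
    -- Chernoff for W
    have hmgf := mgf_bound μ W hWm 4 hWb hWmean β hβ hmomW l₀
    have hch := chernoff_pi μ n W hWm 4
      (by filter_upwards [hWb] with q h using (abs_le.1 h).2)
      l₀ ((n:ℝ) * (a₁ * γ)) (Real.exp (2 * β * l₀ ^ 2)) hl₀nn hmgf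
    rw [hpp]
    refine le_trans hch (ENNReal.ofReal_le_ofReal ?_)
    rw [← Real.exp_nat_mul, ← Real.exp_add]
    apply Real.exp_le_exp.2
    have hval : -(l₀ * ((n:ℝ) * (a₁ * γ))) + (n:ℝ) * (2 * β * l₀ ^ 2)
        = -((n:ℝ) * m * a₁ ^ 2 * γ ^ 2 / (64 * c * L ^ 2)) := by
      rw [hl₀def, hβdef, hc0def]
      field_simp
      ring
    rw [hval]
    apply neg_le_neg
    apply div_le_div_of_nonneg_left (by positivity) (by nlinarith) (by nlinarith)
  -- event inclusion
  have hincl : {ω : Fin n → E × ℝ | ∃ f ∈ F, (1 - 3 * a) * γ / 2 ≤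
        (n : ℝ)⁻¹ * ∑ i, ((ω i).2 - condMean μ (ω i)) * f (ω i).1} ⊆
      (⋃ f ∈ F, {ω : Fin n → E × ℝ | (n:ℝ) * (a₁ * γ) ≤
          ∑ i, z (ω i) * (f (ω i).1 - ∫ x, f x ∂(μ.map Prod.fst))}) ∪
      ({ω : Fin n → E × ℝ | (n:ℝ) * (a₂ * γ) ≤ ∑ i, z (ω i)} ∪
       {ω : Fin n → E × ℝ | (n:ℝ) * (a₂ * γ) ≤ ∑ i, -(z (ω i))}) := by
    rintro ω ⟨f, hfF, hω⟩
    have hfb : ∀ x, |f x| ≤ 1 := fun x =>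
      abs_le.2 ⟨(hrange f hfF x).1, (hrange f hfF x).2⟩
    haveI : IsProbabilityMeasure (μ.map (Prod.fst : E × ℝ → E)) :=
      Measure.isProbabilityMeasure_map measurable_fst.aemeasurable
    set Ef : ℝ := ∫ x, f x ∂(μ.map Prod.fst) with hEfdef
    have hEfb : |Ef| ≤ 1 := by
      rw [hEfdef]
      have hn' := norm_integral_le_of_norm_le_const (μ := μ.map Prod.fst) (C := 1)
        (Filter.Eventually.of_forall fun x => by rw [Real.norm_eq_abs]; exact hfb x)
      rw [Real.norm_eq_abs] at hn'
      simpa using hn'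
    -- multiply through by n
    have h1 : (n:ℝ) * ((1 - 3 * a) * γ / 2) ≤
        ∑ i, ((ω i).2 - condMean μ (ω i)) * f (ω i).1 := by
      have h2 := mul_le_mul_of_nonneg_left hω (le_of_lt hnR)
      rwa [← mul_assoc, mul_inv_cancel₀ (ne_of_gt hnR), one_mul] at h2
    have hz_eq : ∀ i : Fin n, ((ω i).2 - condMean μ (ω i)) = z (ω i) := fun i => by
      rw [hzdef]
    have hsplit : ∑ i, ((ω i).2 - condMean μ (ω i)) * f (ω i).1
        = (∑ i, z (ω i) * (f (ω i).1 - Ef)) + Ef * ∑ i, z (ω i) := by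
      rw [Finset.mul_sum, ← Finset.sum_add_distrib]
      refine Finset.sum_congr rfl fun i _ => ?_
      rw [hz_eq i]
      ring
    have hth : (n:ℝ) * ((1 - 3 * a) * γ / 2)
        = (n:ℝ) * (a₁ * γ) + (n:ℝ) * (a₂ * γ) := by
      have : (1 - 3 * a) * γ / 2 = a₁ * γ + a₂ * γ := by
        rw [← add_mul, ha₁₂]
        ring
      rw [this]
      ring
    by_cases hcase : (n:ℝ) * (a₁ * γ) ≤ ∑ i, z (ω i) * (f (ω i).1 - Ef)
    · left
      exact Set.mem_biUnion hfF hcase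
    · right
      push_neg at hcase
      have h3 : (n:ℝ) * (a₂ * γ) < Ef * ∑ i, z (ω i) := by
        rw [hsplit, hth] at h1
        linarith
      have h4 : (n:ℝ) * (a₂ * γ) ≤ |∑ i, z (ω i)| := by
        calc (n:ℝ) * (a₂ * γ) ≤ Ef * ∑ i, z (ω i) := le_of_lt h3
          _ ≤ |Ef * ∑ i, z (ω i)| := le_abs_self _
          _ = |Ef| * |∑ i, z (ω i)| := abs_mul _ _
          _ ≤ 1 * |∑ i, z (ω i)| := mul_le_mul_of_nonneg_right hEfb (abs_nonneg _)
          _ = |∑ i, z (ω i)| := one_mul _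
      rcases le_abs'.1 h4 with h5 | h5
      · right
        simp only [Set.mem_setOf_eq, Finset.sum_neg_distrib]
        linarith
      · left
        exact h5
  -- put everything together
  calc pp {ω | ∃ f ∈ F, (1 - 3 * a) * γ / 2 ≤
        (n : ℝ)⁻¹ * ∑ i, ((ω i).2 - condMean μ (ω i)) * f (ω i).1}
      ≤ pp ((⋃ f ∈ F, {ω : Fin n → E × ℝ | (n:ℝ) * (a₁ * γ) ≤
            ∑ i, z (ω i) * (f (ω i).1 - ∫ x, f x ∂(μ.map Prod.fst))}) ∪
          ({ω : Fin n → E × ℝ | (n:ℝ) * (a₂ * γ) ≤ ∑ i, z (ω i)} ∪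
           {ω : Fin n → E × ℝ | (n:ℝ) * (a₂ * γ) ≤ ∑ i, -(z (ω i))})) :=
        measure_mono hincl
    _ ≤ pp (⋃ f ∈ F, {ω : Fin n → E × ℝ | (n:ℝ) * (a₁ * γ) ≤
            ∑ i, z (ω i) * (f (ω i).1 - ∫ x, f x ∂(μ.map Prod.fst))}) +
          pp ({ω : Fin n → E × ℝ | (n:ℝ) * (a₂ * γ) ≤ ∑ i, z (ω i)} ∪
           {ω : Fin n → E × ℝ | (n:ℝ) * (a₂ * γ) ≤ ∑ i, -(z (ω i))}) := measure_union_le _ _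
    _ ≤ (∑ f ∈ F, pp {ω : Fin n → E × ℝ | (n:ℝ) * (a₁ * γ) ≤
            ∑ i, z (ω i) * (f (ω i).1 - ∫ x, f x ∂(μ.map Prod.fst))}) +
          (pp {ω : Fin n → E × ℝ | (n:ℝ) * (a₂ * γ) ≤ ∑ i, z (ω i)} +
           pp {ω : Fin n → E × ℝ | (n:ℝ) * (a₂ * γ) ≤ ∑ i, -(z (ω i))}) :=
        add_le_add (measure_biUnion_finset_le _ _) (measure_union_le _ _)
    _ ≤ (∑ _f ∈ F, ENNReal.ofReal
            (Real.exp (-(n * m * a₁ ^ 2 * γ ^ 2 / (144 * c * L ^ 2))))) +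
          (ENNReal.ofReal (Real.exp (-(n * a₂ ^ 2 * γ ^ 2 / 8))) +
           ENNReal.ofReal (Real.exp (-(n * a₂ ^ 2 * γ ^ 2 / 8)))) :=
        add_le_add (Finset.sum_le_sum hA) (add_le_add hBplus hBminus)
    _ ≤ ENNReal.ofReal (2 * F.card *
            Real.exp (-(n * m * a₁ ^ 2 * γ ^ 2 / (144 * c * L ^ 2))))
        + ENNReal.ofReal (2 * Real.exp (-(n * a₂ ^ 2 * γ ^ 2 / 8))) := by
      apply add_le_add
      · rw [Finset.sum_const, nsmul_eq_mul]
        rw [← ENNReal.ofReal_natCast, ← ENNReal.ofReal_mul (Nat.cast_nonneg _)]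
        apply ENNReal.ofReal_le_ofReal
        nlinarith [Real.exp_pos (-(n * m * a₁ ^ 2 * γ ^ 2 / (144 * c * L ^ 2))),
          Nat.cast_nonneg (α := ℝ) F.card]
      · rw [← ENNReal.ofReal_add (Real.exp_pos _).le (Real.exp_pos _).le]
        apply ENNReal.ofReal_le_ofReal
        linarith
end
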